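/- arXiv:1602.05491 — 9 statements merged into one kernel-verified Lean document; each statement's English description precedes it below -/
import Mathlib

section
/- Let f : ℕ → ℝ be a sequence and ε : ℕ → ℝ a sequence of non-negative numbers such that ε(n)/n → 0 as n → ∞ and ∑_{n=1}^∞ ε(2^n)/2^n < ∞. Assume f is almost super-additive relative to ε, i.e. f(n+m) ≥ f(n) + f(m) − ε(n+m) for all n, m ≥ 1. Then: (1) if sup_{n≥1} f(n)/n < +∞, the limit lim_{n→∞} f(n)/n exists and is finite; (2) if sup_{n≥1} f(n)/n = +∞, then f(n)/n → +∞ as n → ∞. -/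
/-!
Put `a k = f (2^k) / 2^k`. Doubling gives `a k ≤ a (k+1) + ε (2^(k+1)) / 2^(k+1)`, so `a` is
monotone up to a summable error and tends either to a finite limit or to `+∞`. Writing
`n = 2^k + m` with `m < 2^k` and recursing on `m` shows that the limit of `a` bounds `f n / n`
from below, up to `ε n / n → 0`; superadditivity applied to `n + (2^(k+1) - n) = 2^(k+1)` then
turns this lower bound into the matching upper bound.
-/

open Filter Topology Finset

def AlmostSuperadditive (f ε : ℕ → ℝ) : Prop :=
  ∀ m n : ℕ, 1 ≤ m → 1 ≤ n → f (n + m) ≥ f n + f m - ε (n + m)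

theorem tendsto_atTop_or_exists_tendsto_of_le_add {a e : ℕ → ℝ} (he : Summable e)
    (h : ∀ k, a k ≤ a (k + 1) + e k) :
    Tendsto a atTop atTop ∨ ∃ L, Tendsto a atTop (𝓝 L) := by
  set S : ℕ → ℝ := fun k => ∑ j ∈ range k, e j
  have hS : Tendsto S atTop (𝓝 (∑' j, e j)) := he.hasSum.tendsto_sum_nat
  have hmono : Monotone (a + S) := monotone_nat_of_le_succ fun k => by
    simp only [Pi.add_apply, S, sum_range_succ]
    linarith [h k]
  have ha : a = (a + S) - S := by simp
  rcases tendsto_atTop_of_monotone hmono with htop | ⟨L, hL⟩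
  · left
    rw [ha, sub_eq_add_neg]
    exact htop.atTop_add hS.neg
  · exact Or.inr ⟨L - ∑' j, e j, ha ▸ hL.sub hS⟩

theorem exists_two_pow_le_lt_two_pow_succ {K n : ℕ} (hn : 2 ^ K ≤ n) :
    ∃ k, K ≤ k ∧ 2 ^ k ≤ n ∧ n < 2 ^ (k + 1) :=
  ⟨Nat.log 2 n, Nat.le_log_of_pow_le one_lt_two hn,
    Nat.pow_log_le_self 2 (Nat.pos_iff_ne_zero.1 (Nat.one_le_two_pow.trans hn)),
    Nat.lt_pow_succ_log_self one_lt_two n⟩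

theorem eventually_le_mul_of_tendsto_div_zero {ε : ℕ → ℝ}
    (hε : Tendsto (fun n : ℕ => ε n / n) atTop (𝓝 0)) {δ : ℝ} (hδ : 0 < δ) :
    ∀ᶠ n : ℕ in atTop, ε n ≤ δ * n := by
  filter_upwards [hε.eventually (Iio_mem_nhds hδ), eventually_ge_atTop 1] with n hlt hn
  exact ((div_lt_iff₀ (Nat.cast_pos.2 hn)).1 hlt).le

theorem eventually_lt_div_of_linear_lower_bound {f : ℕ → ℝ} {β C γ : ℝ}
    (h : ∀ n, 1 ≤ n → β * n - C ≤ f n) (hγ : γ < β) :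
    ∀ᶠ n : ℕ in atTop, γ < f n / n := by
  filter_upwards [eventually_ge_atTop 1,
    tendsto_natCast_atTop_atTop.eventually_gt_atTop (C / (β - γ))] with n hn hCn
  rw [div_lt_iff₀ (sub_pos.2 hγ)] at hCn
  rw [lt_div_iff₀ (Nat.cast_pos.2 hn)]
  linarith [h n hn]

namespace AlmostSuperadditive

variable {f ε : ℕ → ℝ}

theorem dyadic_step (hf : AlmostSuperadditive f ε) (k : ℕ) :
    f (2 ^ k) / 2 ^ k ≤ f (2 ^ (k + 1)) / 2 ^ (k + 1) + ε (2 ^ (k + 1)) / 2 ^ (k + 1) := by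
  have h := hf (2 ^ k) (2 ^ k) Nat.one_le_two_pow Nat.one_le_two_pow
  rw [show 2 ^ k + 2 ^ k = 2 ^ (k + 1) by ring] at h
  rw [← add_div, le_div_iff₀ (by positivity), pow_succ, ← mul_assoc,
    div_mul_cancel₀ _ (by positivity)]
  linarith

theorem linear_lower_bound (hf : AlmostSuperadditive f ε) {s : ℕ} {b δ C : ℝ} (hδ : 0 ≤ δ)
    (hC : 0 ≤ C) (hpow : ∀ k, s ≤ k → b * 2 ^ k ≤ f (2 ^ k))
    (hε : ∀ n, 2 ^ s ≤ n → ε n ≤ δ * n)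
    (hsmall : ∀ r, 1 ≤ r → r < 2 ^ s → b * r - C ≤ f r) :
    ∀ n, 1 ≤ n → (b - 2 * δ) * n - C ≤ f n := by
  intro n
  induction n using Nat.strong_induction_on with
  | _ n ih =>
  intro hn
  rcases lt_or_ge n (2 ^ s) with hns | hns
  · have := mul_nonneg hδ (Nat.cast_nonneg (α := ℝ) n)
    linarith [hsmall n hn hns]
  obtain ⟨k, hsk, hkn, hnk⟩ := exists_two_pow_le_lt_two_pow_succ hns
  obtain ⟨m, rfl⟩ := Nat.exists_eq_add_of_le hkn
  have hεn := hε _ hns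
  have hk := hpow k hsk
  push_cast at hεn hk ⊢
  rcases Nat.eq_zero_or_pos m with rfl | hm
  · have := mul_nonneg hδ (pow_nonneg (zero_le_two (α := ℝ)) k)
    simp only [add_zero, CharP.cast_eq_zero] at hk ⊢
    linarith
  have hmk : (m : ℝ) ≤ 2 ^ k := by
    rw [pow_succ] at hnk
    exact_mod_cast (by omega : m ≤ 2 ^ k)
  have hsum := hf m (2 ^ k) hm Nat.one_le_two_pow
  have ihm := ih m (by omega) hm
  have := mul_le_mul_of_nonneg_left hmk hδ
  linarith

theorem exists_linear_lower_bound (hf : AlmostSuperadditive f ε)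
    (hε : Tendsto (fun n : ℕ => ε n / n) atTop (𝓝 0)) {b β : ℝ} (hβ : β < b)
    (hpow : ∀ᶠ k in atTop, b ≤ f (2 ^ k) / 2 ^ k) :
    ∃ C, ∀ n, 1 ≤ n → β * n - C ≤ f n := by
  obtain ⟨N, hN⟩ := eventually_atTop.1
    (eventually_le_mul_of_tendsto_div_zero hε (half_pos (sub_pos.2 hβ)))
  obtain ⟨K, hK⟩ := eventually_atTop.1 hpow
  set s := max K N
  refine ⟨∑ r ∈ range (2 ^ s), |b * r - f r|, ?_⟩
  have := hf.linear_lower_bound (s := s) (half_pos (sub_pos.2 hβ)).le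
    (sum_nonneg fun r _ => abs_nonneg _)
    (fun k hk => (le_div_iff₀ (by positivity)).1 (hK k (le_of_max_le_left hk)))
    (fun n hn => hN n ((le_max_right K N).trans (Nat.lt_two_pow_self.le.trans hn)))
    (fun r _ hr => by
      have := single_le_sum (fun i _ => abs_nonneg (b * i - f i)) (mem_range.2 hr)
      linarith [le_abs_self (b * r - f r)])
  convert this using 4
  ring

theorem eventually_lt_div (hf : AlmostSuperadditive f ε)
    (hε : Tendsto (fun n : ℕ => ε n / n) atTop (𝓝 0)) {b γ : ℝ} (hγ : γ < b)
    (hpow : ∀ᶠ k in atTop, b ≤ f (2 ^ k) / 2 ^ k) :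
    ∀ᶠ n : ℕ in atTop, γ < f n / n := by
  obtain ⟨C, hC⟩ := hf.exists_linear_lower_bound hε (β := (γ + b) / 2) (by linarith) hpow
  exact eventually_lt_div_of_linear_lower_bound hC (by linarith)

theorem eventually_div_lt (hf : AlmostSuperadditive f ε)
    (hε : Tendsto (fun n : ℕ => ε n / n) atTop (𝓝 0)) {β B D γ : ℝ} (hβB : β ≤ B)
    (hlow : ∀ n, 1 ≤ n → β * n - D ≤ f n)
    (hup : ∀ᶠ k in atTop, f (2 ^ k) / 2 ^ k ≤ B)
    (hγ : 2 * B - β < γ) :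
    ∀ᶠ n : ℕ in atTop, f n / n < γ := by
  obtain ⟨δ, hδ, hγδ⟩ : ∃ δ > 0, γ = 2 * B - β + 3 * δ :=
    ⟨(γ - (2 * B - β)) / 3, by linarith, by ring⟩
  subst hγδ
  have hεpow := (tendsto_pow_atTop_atTop_of_one_lt (one_lt_two (α := ℕ))).eventually
    (eventually_le_mul_of_tendsto_div_zero hε hδ)
  obtain ⟨K, hK⟩ := eventually_atTop.1 (hup.and hεpow)
  filter_upwards [eventually_ge_atTop (2 ^ K),
    tendsto_natCast_atTop_atTop.eventually_gt_atTop (D / δ)] with n hn hDn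
  obtain ⟨k, hKk, hkn, hnk⟩ := exists_two_pow_le_lt_two_pow_succ hn
  obtain ⟨hfq, hεq⟩ := hK (k + 1) (by omega)
  obtain ⟨p, hp⟩ := Nat.exists_eq_add_of_le hnk.le
  have hp1 : 1 ≤ p := by omega
  have hpn : (p : ℝ) ≤ n := by
    rw [pow_succ] at hp
    exact_mod_cast (by omega : p ≤ n)
  have hsum := hf p n hp1 (Nat.one_le_two_pow.trans hn)
  rw [← hp] at hsum
  rw [div_le_iff₀ (by positivity)] at hfq
  rw [div_lt_iff₀ hδ] at hDn
  rw [div_lt_iff₀ (by exact_mod_cast Nat.one_le_two_pow.trans hn)]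
  have hq : ((2 ^ (k + 1) : ℕ) : ℝ) = n + p := by exact_mod_cast hp
  push_cast at hq hεq
  rw [hq] at hfq hεq
  have := mul_le_mul_of_nonneg_left hpn (by linarith : 0 ≤ B + δ - β)
  have := hlow p hp1
  linarith

theorem tendsto_div_of_tendsto_dyadic (hf : AlmostSuperadditive f ε)
    (hε : Tendsto (fun n : ℕ => ε n / n) atTop (𝓝 0)) {L : ℝ}
    (hL : Tendsto (fun k => f (2 ^ k) / 2 ^ k) atTop (𝓝 L)) :
    Tendsto (fun n : ℕ => f n / n) atTop (𝓝 L) := by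
  refine tendsto_order.2 ⟨fun l hl => ?_, fun u hu => ?_⟩
  · obtain ⟨b, hlb, hbL⟩ := exists_between hl
    exact hf.eventually_lt_div hε hlb (hL.eventually (Ici_mem_nhds hbL))
  · obtain ⟨η, hη, huη⟩ : ∃ η > 0, u = L + 4 * η :=
      ⟨(u - L) / 4, by linarith, by ring⟩
    obtain ⟨D, hD⟩ := hf.exists_linear_lower_bound hε (β := L - η) (b := L - η / 2)
      (by linarith)
      (hL.eventually (Ici_mem_nhds (by linarith)))
    exact hf.eventually_div_lt hε (B := L + η) (by linarith) hD
      (hL.eventually (Iic_mem_nhds (by linarith))) (by linarith)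

theorem tendsto_div_atTop_of_tendsto_dyadic (hf : AlmostSuperadditive f ε)
    (hε : Tendsto (fun n : ℕ => ε n / n) atTop (𝓝 0))
    (h : Tendsto (fun k => f (2 ^ k) / 2 ^ k) atTop atTop) :
    Tendsto (fun n : ℕ => f n / n) atTop atTop :=
  tendsto_atTop.2 fun M =>
    (hf.eventually_lt_div hε (lt_add_one M) (tendsto_atTop.1 h (M + 1))).mono fun _ => le_of_lt

end AlmostSuperadditive

theorem almost_superadditive_limit_general (f ε : ℕ → ℝ)
    (hε_lim : Tendsto (fun n : ℕ => ε n / n) atTop (𝓝 0))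
    (hε_sum : Summable (fun n : ℕ => ε (2 ^ (n + 1)) / 2 ^ (n + 1)))
    (hsuper : ∀ m n : ℕ, 1 ≤ m → 1 ≤ n → f (n + m) ≥ f n + f m - ε (n + m)) :
    (BddAbove {x : ℝ | ∃ n : ℕ, 1 ≤ n ∧ x = f n / n} →
      ∃ L : ℝ, Tendsto (fun n : ℕ => f n / n) atTop (𝓝 L)) ∧
    (¬ BddAbove {x : ℝ | ∃ n : ℕ, 1 ≤ n ∧ x = f n / n} →
      Tendsto (fun n : ℕ => f n / n) atTop atTop) := by
  have hf : AlmostSuperadditive f ε := hsuper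
  have hdyadic_mem :
      ∀ k : ℕ, f (2 ^ k) / 2 ^ k ∈ {x : ℝ | ∃ n : ℕ, 1 ≤ n ∧ x = f n / n} :=
    fun k => ⟨2 ^ k, Nat.one_le_two_pow, by push_cast; rfl⟩
  rcases tendsto_atTop_or_exists_tendsto_of_le_add hε_sum hf.dyadic_step with htop | ⟨L, hL⟩
  · refine ⟨fun hbdd => absurd (hbdd.mono (Set.range_subset_iff.2 hdyadic_mem))
      (not_bddAbove_of_tendsto_atTop htop),
      fun _ => hf.tendsto_div_atTop_of_tendsto_dyadic hε_lim htop⟩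
  · refine ⟨fun _ => ⟨L, hf.tendsto_div_of_tendsto_dyadic hε_lim hL⟩,
      fun hnb => absurd ?_ hnb⟩
    refine (hf.tendsto_div_of_tendsto_dyadic hε_lim hL).bddAbove_range.mono ?_
    rintro x ⟨n, -, rfl⟩
    exact ⟨n, rfl⟩

/-- Almost super-additivity: if `f (n+m) ≥ f n + f m - ε (n+m)` for `n, m ≥ 1`, with
`ε n / n → 0` and `∑_{n≥1} ε (2^n) / 2^n < ∞`, then either `f n / n` converges to a
finite limit (when the ratios are bounded above) or diverges to `+∞` (otherwise). -/
theorem almost_superadditive_limit (f ε : ℕ → ℝ)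
    (hε_nonneg : ∀ n, 0 ≤ ε n)
    (hε_lim : Tendsto (fun n : ℕ => ε n / n) atTop (𝓝 0))
    (hε_sum : Summable (fun n : ℕ => ε (2 ^ (n + 1)) / 2 ^ (n + 1)))
    (hsuper : ∀ m n : ℕ, 1 ≤ m → 1 ≤ n → f (n + m) ≥ f n + f m - ε (n + m)) :
    (BddAbove {x : ℝ | ∃ n : ℕ, 1 ≤ n ∧ x = f n / n} →
      ∃ L : ℝ, Tendsto (fun n : ℕ => f n / n) atTop (𝓝 L)) ∧
    (¬ BddAbove {x : ℝ | ∃ n : ℕ, 1 ≤ n ∧ x = f n / n} →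
      Tendsto (fun n : ℕ => f n / n) atTop atTop) :=
  almost_superadditive_limit_general f ε hε_lim hε_sum hsuper
end

section
/- For every H ∈ (0,1) there exists a constant C > 0 depending only on H such that for all positive integers n and k and all real u, v with n+k ≤ u, v ≤ n+k+1, one has ∫₀ⁿ ( (u−s)^{H−3/2} (u/s)^{H−1/2} − (v−s)^{H−3/2} (v/s)^{H−1/2} )² ds ≤ C (1 + k/n)^{2H−1} k^{2H−4} (u−v)². -/
/-!
Write the integrand as `s ^ (1/2 - H) * (g u - g v)` with `g w = (w - s) ^ (H - 3/2) * w ^ (H - 1/2)`.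
On `[c, 2c]`, `c = n + k`, the mean value theorem applied to each factor of `g` gives
`|g u - g v| ≲ (c - s) ^ (H - 5/2) * c ^ (H - 1/2) * |u - v|`, so the integral is at most a multiple
of `(u - v) ^ 2 * c ^ (2H - 1) * ∫₀ⁿ s ^ (1 - 2H) (c - s) ^ (2H - 5) ds`. Splitting this last integral
at `n/2`, on `[0, n/2]` the factor `(c - s) ^ (2H - 5)` is `≲ c ^ (2H - 5)` and `s ^ (1 - 2H)` is
integrable, while on `[n/2, n]` the factor `s ^ (1 - 2H)` is `≲ n ^ (1 - 2H)` and
`∫ (c - s) ^ (2H - 5) ≲ k ^ (2H - 4)`; altogether `≲ n ^ (1 - 2H) k ^ (2H - 4)`, and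
`c ^ (2H - 1) n ^ (1 - 2H) = (1 + k/n) ^ (2H - 1)`.
-/

open MeasureTheory Set

lemma rpow_le_two_mul_rpow {x y p : ℝ} (hy : 0 < y) (hx : y / 2 ≤ x) (hx' : x ≤ 2 * y)
    (hp : |p| ≤ 1) : x ^ p ≤ 2 * y ^ p := by
  obtain ⟨hp, hp'⟩ := abs_le.1 hp
  have hr : 0 < x / y := div_pos (by linarith) hy
  have hratio : (x / y) ^ p ≤ 2 := by
    rcases le_total 1 (x / y) with h | h
    · calc (x / y) ^ p ≤ (x / y) ^ (1 : ℝ) := Real.rpow_le_rpow_of_exponent_le h hp'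
        _ ≤ 2 := by rw [Real.rpow_one, div_le_iff₀ hy]; linarith
    · calc (x / y) ^ p ≤ (x / y) ^ (-1 : ℝ) := Real.rpow_le_rpow_of_exponent_ge hr h hp
        _ ≤ 2 := by
          rw [Real.rpow_neg_one, inv_div, div_le_iff₀ (by linarith)]; linarith
  calc x ^ p = (x / y) ^ p * y ^ p := by
        rw [Real.div_rpow (by linarith) hy.le, div_mul_cancel₀ _ (Real.rpow_pos_of_pos hy p).ne']
    _ ≤ 2 * y ^ p := by gcongr

lemma abs_rpow_sub_rpow_le {c x y p : ℝ} (hc : 0 < c) (hx : c ≤ x) (hy : c ≤ y) (hp : p ≤ 1) :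
    |x ^ p - y ^ p| ≤ |p| * c ^ (p - 1) * |x - y| := by
  have hderiv : ∀ z ∈ Ici c, HasDerivWithinAt (fun t : ℝ => t ^ p) (p * z ^ (p - 1)) (Ici c) z :=
    fun z hz => (Real.hasDerivAt_rpow_const (Or.inl (hc.trans_le hz).ne')).hasDerivWithinAt
  have hbound : ∀ z ∈ Ici c, ‖p * z ^ (p - 1)‖ ≤ |p| * c ^ (p - 1) := fun z hz => by
    rw [Real.norm_eq_abs, abs_mul, abs_of_nonneg (Real.rpow_nonneg (hc.le.trans hz) _)]
    exact mul_le_mul_of_nonneg_left (Real.rpow_le_rpow_of_nonpos hc hz (by linarith)) (abs_nonneg p)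
  simpa only [Real.norm_eq_abs] using
    (convex_Ici c).norm_image_sub_le_of_norm_hasDerivWithin_le hderiv hbound hy hx

lemma abs_sub_rpow_mul_rpow_sub_le {α β c s u v : ℝ} (hα : α ≤ 0) (hβ : |β| ≤ 1)
    (hs : 0 ≤ s) (hsc : s < c) (hu : c ≤ u) (hu' : u ≤ 2 * c) (hv : c ≤ v) :
    |(u - s) ^ α * u ^ β - (v - s) ^ α * v ^ β|
      ≤ (2 * |α| + |β|) * (c - s) ^ (α - 1) * c ^ β * |u - v| := by
  have hc : 0 < c := by linarith
  have hcs : 0 < c - s := by linarith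
  have hA := abs_rpow_sub_rpow_le hcs (x := u - s) (y := v - s) (by linarith) (by linarith)
    (hα.trans zero_le_one)
  have hB := abs_rpow_sub_rpow_le hc hu hv (le_of_abs_le hβ)
  rw [sub_sub_sub_cancel_right] at hA
  have hBu : u ^ β ≤ 2 * c ^ β := rpow_le_two_mul_rpow hc (by linarith) hu' hβ
  have hAv : (v - s) ^ α ≤ (c - s) ^ α := Real.rpow_le_rpow_of_nonpos hcs (by linarith) hα
  have hshift : (c - s) ^ α * c ^ (β - 1) ≤ (c - s) ^ (α - 1) * c ^ β := by
    rw [Real.rpow_sub_one hcs.ne', Real.rpow_sub_one hc.ne', div_mul_eq_mul_div, mul_div_assoc]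
    gcongr
    linarith
  calc |(u - s) ^ α * u ^ β - (v - s) ^ α * v ^ β|
      = |((u - s) ^ α - (v - s) ^ α) * u ^ β + (v - s) ^ α * (u ^ β - v ^ β)| := by congr 1; ring
    _ ≤ |(u - s) ^ α - (v - s) ^ α| * u ^ β + (v - s) ^ α * |u ^ β - v ^ β| := by
      refine (abs_add_le _ _).trans_eq ?_
      rw [abs_mul, abs_mul, abs_of_nonneg (Real.rpow_nonneg (by linarith) _),
        abs_of_nonneg (Real.rpow_nonneg (by linarith) _)]
    _ ≤ (|α| * (c - s) ^ (α - 1) * |u - v|) * (2 * c ^ β)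
        + (c - s) ^ α * (|β| * c ^ (β - 1) * |u - v|) := by
      gcongr
      exact Real.rpow_nonneg (by linarith) _
    _ ≤ (|α| * (c - s) ^ (α - 1) * |u - v|) * (2 * c ^ β)
        + |β| * |u - v| * ((c - s) ^ (α - 1) * c ^ β) := by
      have := mul_le_mul_of_nonneg_left hshift (mul_nonneg (abs_nonneg β) (abs_nonneg (u - v)))
      linarith
    _ = (2 * |α| + |β|) * (c - s) ^ (α - 1) * c ^ β * |u - v| := by ring

lemma sq_rpow {x : ℝ} (hx : 0 ≤ x) (p : ℝ) : (x ^ p) ^ 2 = x ^ (2 * p) := by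
  rw [← Real.rpow_mul_natCast hx, mul_comm]; norm_num

noncomputable def volterraKernel (H u s : ℝ) : ℝ := (u - s) ^ (H - 3/2) * (u / s) ^ (H - 1/2)

lemma sq_volterraKernel_sub_le {H c s u v : ℝ} (hH : H ∈ Ioo (0 : ℝ) 1) (hs : 0 < s) (hsc : s < c)
    (hu : c ≤ u) (hu' : u ≤ 2 * c) (hv : c ≤ v) :
    (volterraKernel H u s - volterraKernel H v s) ^ 2
      ≤ 49/4 * (u - v) ^ 2 * c ^ (2*H - 1) * (s ^ (1 - 2*H) * (c - s) ^ (2*H - 5)) := by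
  obtain ⟨hH, hH'⟩ := hH
  have hc : 0 < c := hs.trans hsc
  have hcs : 0 < c - s := by linarith
  have hfactor : ∀ w, 0 ≤ w → volterraKernel H w s
      = (w - s) ^ (H - 3/2) * w ^ (H - 1/2) * (s ^ (H - 1/2))⁻¹ := fun w hw => by
    rw [volterraKernel, Real.div_rpow hw hs.le]; ring
  have hconst : 2 * |H - 3/2| + |H - 1/2| ≤ 7/2 := by
    have : |H - 1/2| ≤ 1/2 := abs_le.2 ⟨by linarith, by linarith⟩
    rw [abs_of_neg (by linarith : H - 3/2 < 0)]
    linarith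
  have hdiff := abs_sub_rpow_mul_rpow_sub_le (α := H - 3/2) (β := H - 1/2) (by linarith)
    (abs_le.2 ⟨by linarith, by linarith⟩) hs.le hsc hu hu' hv
  have hbound : |(u - s) ^ (H - 3/2) * u ^ (H - 1/2) - (v - s) ^ (H - 3/2) * v ^ (H - 1/2)|
      ≤ 7/2 * ((c - s) ^ (H - 3/2 - 1) * c ^ (H - 1/2) * |u - v|) := by
    refine hdiff.trans (le_of_eq_of_le (by ring) (mul_le_mul_of_nonneg_right hconst ?_))
    exact mul_nonneg (mul_nonneg (Real.rpow_nonneg hcs.le _) (Real.rpow_nonneg hc.le _))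
      (abs_nonneg _)
  have hs_sq : ((s ^ (H - 1/2))⁻¹) ^ 2 = s ^ (1 - 2*H) := by
    rw [inv_pow, sq_rpow hs.le, ← Real.rpow_neg hs.le]; ring_nf
  rw [hfactor u (by linarith), hfactor v (by linarith), ← sub_mul, mul_pow, hs_sq]
  calc _ ≤ (7/2 * ((c - s) ^ (H - 3/2 - 1) * c ^ (H - 1/2) * |u - v|)) ^ 2 * s ^ (1 - 2*H) :=
        mul_le_mul_of_nonneg_right (sq_le_sq' (abs_le.1 hbound).1 (abs_le.1 hbound).2)
          (Real.rpow_nonneg hs.le _)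
    _ = _ := by
        rw [mul_pow, mul_pow, mul_pow, sq_rpow hcs.le, sq_rpow hc.le, sq_abs]
        ring_nf

lemma continuousOn_rpow_mul_sub_rpow {p q a c : ℝ} (hac : a < c) :
    ContinuousOn (fun s : ℝ => s ^ p * (c - s) ^ q) (Ioc 0 a) :=
  (continuousOn_id.rpow_const fun _ hs => Or.inl hs.1.ne').mul
    ((continuousOn_const.sub continuousOn_id).rpow_const fun _ hs =>
      Or.inl (sub_pos.2 (hs.2.trans_lt hac)).ne')

lemma integrableOn_rpow_mul_sub_rpow {p q a c : ℝ} (hp : -1 < p) (hq : q ≤ 0) (hac : a < c) :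
    IntegrableOn (fun s : ℝ => s ^ p * (c - s) ^ q) (Ioc 0 a) := by
  have hdom : IntegrableOn (fun s : ℝ => s ^ p * (c - a) ^ q) (Ioc 0 a) := by
    rcases le_or_gt a 0 with ha | ha
    · simp [Ioc_eq_empty_of_le ha]
    exact ((intervalIntegrable_iff_integrableOn_Ioc_of_le ha.le).1
      (intervalIntegral.intervalIntegrable_rpow' hp)).mul_const _
  refine hdom.mono' ((continuousOn_rpow_mul_sub_rpow hac).aestronglyMeasurable measurableSet_Ioc) ?_
  refine (ae_restrict_iff' measurableSet_Ioc).2 (ae_of_all _ fun s hs => ?_)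
  have hcs : 0 < c - s := sub_pos.2 (hs.2.trans_lt hac)
  rw [Real.norm_eq_abs, abs_of_nonneg (mul_nonneg (Real.rpow_nonneg hs.1.le _)
    (Real.rpow_nonneg hcs.le _))]
  exact mul_le_mul_of_nonneg_left
    (Real.rpow_le_rpow_of_nonpos (by linarith) (by linarith [hs.2]) hq) (Real.rpow_nonneg hs.1.le _)

lemma integral_rpow_mul_sub_rpow_le_of_le_half {p q a b : ℝ} (hp : -1 < p) (hq : q ≤ -1)
    (ha : 0 < a) (hb : 0 < b) :
    ∫ s in (0 : ℝ)..a / 2, s ^ p * (a + b - s) ^ q ≤ 2 ^ (-q) / (p + 1) * (a ^ p * b ^ (q + 1)) := by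
  set c := a + b
  have hc : 0 < c := by positivity
  have hint : IntervalIntegrable (fun s : ℝ => s ^ p * (c - s) ^ q) volume 0 (a / 2) :=
    (intervalIntegrable_iff_integrableOn_Ioc_of_le (by linarith)).2
      ((integrableOn_rpow_mul_sub_rpow hp (by linarith : q ≤ 0) (by linarith : a < c)).mono_set
        (Ioc_subset_Ioc_right (by linarith)))
  -- on `[0, a/2]` the second factor is at most `(c/2) ^ q`
  have hmono := intervalIntegral.integral_mono_on (by linarith) hint
    ((intervalIntegral.intervalIntegrable_rpow' hp).mul_const ((c / 2) ^ q)) fun s hs =>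
      mul_le_mul_of_nonneg_left
        (Real.rpow_le_rpow_of_nonpos (by positivity) (by linarith [hs.2]) (by linarith))
        (Real.rpow_nonneg hs.1 p)
  refine hmono.trans ?_
  rw [intervalIntegral.integral_mul_const, integral_rpow (Or.inl hp),
    Real.zero_rpow (by linarith), sub_zero]
  have hhalf : (c / 2) ^ q = 2 ^ (-q) * c ^ q := by
    rw [Real.div_rpow hc.le zero_le_two, Real.rpow_neg zero_le_two, div_eq_inv_mul]
  have ha_pow : (a / 2) ^ (p + 1) ≤ a ^ p * a := by
    rw [← Real.rpow_add_one ha.ne']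
    exact Real.rpow_le_rpow (by positivity) (by linarith) (by linarith)
  have hc_pow : c ^ q * a ≤ b ^ (q + 1) :=
    calc c ^ q * a ≤ c ^ q * c := by gcongr; linarith
      _ = c ^ (q + 1) := (Real.rpow_add_one hc.ne' q).symm
      _ ≤ b ^ (q + 1) := Real.rpow_le_rpow_of_nonpos hb (by linarith) (by linarith)
  calc (a / 2) ^ (p + 1) / (p + 1) * (c / 2) ^ q
      ≤ a ^ p * a / (p + 1) * (2 ^ (-q) * c ^ q) := by
        rw [hhalf]; gcongr; linarith
    _ = 2 ^ (-q) / (p + 1) * (a ^ p * (c ^ q * a)) := by ring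
    _ ≤ 2 ^ (-q) / (p + 1) * (a ^ p * b ^ (q + 1)) := by
        gcongr
        exact div_nonneg (by positivity) (by linarith)

lemma integral_rpow_mul_sub_rpow_le_of_half_le {p q a b : ℝ} (hp : |p| ≤ 1) (hq : q < -1)
    (ha : 0 < a) (hb : 0 < b) :
    ∫ s in a / 2..a, s ^ p * (a + b - s) ^ q ≤ 2 / (-q - 1) * (a ^ p * b ^ (q + 1)) := by
  set c := a + b
  have hsub : uIcc (a / 2) a ⊆ Ioc 0 a := by
    rw [uIcc_of_le (by linarith)]; exact Icc_subset_Ioc_iff (by linarith) |>.2 ⟨by linarith, le_rfl⟩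
  have hint : IntervalIntegrable (fun s : ℝ => s ^ p * (c - s) ^ q) volume (a / 2) a :=
    ((continuousOn_rpow_mul_sub_rpow (by linarith : a < c)).mono hsub).intervalIntegrable
  have hint' : IntervalIntegrable (fun s : ℝ => 2 * a ^ p * (c - s) ^ q) volume (a / 2) a :=
    (continuousOn_const.mul ((continuousOn_const.sub continuousOn_id).rpow_const fun s hs =>
      Or.inl (sub_pos.2 ((hsub hs).2.trans_lt (by linarith : a < c))).ne')).intervalIntegrable
  -- on `[a/2, a]` the first factor is at most `2 a ^ p`
  have hmono := intervalIntegral.integral_mono_on (by linarith) hint hint' fun s hs =>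
    mul_le_mul_of_nonneg_right (rpow_le_two_mul_rpow ha hs.1 (by linarith [hs.2]) hp)
      (Real.rpow_nonneg (by linarith [hs.2]) q)
  refine hmono.trans ?_
  rw [intervalIntegral.integral_const_mul,
    intervalIntegral.integral_comp_sub_left (fun t : ℝ => t ^ q) c,
    integral_rpow (Or.inr ⟨by linarith, notMem_uIcc_of_lt (by linarith) (by linarith)⟩),
    show c - a = b by ring]
  have htail : 0 ≤ (c - a / 2) ^ (q + 1) := Real.rpow_nonneg (by linarith) _
  calc 2 * a ^ p * (((c - a / 2) ^ (q + 1) - b ^ (q + 1)) / (q + 1))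
      = 2 * a ^ p * ((b ^ (q + 1) - (c - a / 2) ^ (q + 1)) / (-q - 1)) := by
        rw [← neg_div_neg_eq]; ring_nf
    _ ≤ 2 * a ^ p * (b ^ (q + 1) / (-q - 1)) := by
        gcongr
        · linarith
        · linarith
    _ = 2 / (-q - 1) * (a ^ p * b ^ (q + 1)) := by ring

lemma setIntegral_rpow_mul_sub_rpow_le {p q a b : ℝ} (hp : -1 < p) (hp' : p ≤ 1) (hq : q < -1)
    (ha : 0 < a) (hb : 0 < b) :
    ∫ s in Ioo 0 a, s ^ p * (a + b - s) ^ q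
      ≤ (2 ^ (-q) / (p + 1) + 2 / (-q - 1)) * (a ^ p * b ^ (q + 1)) := by
  have hint := integrableOn_rpow_mul_sub_rpow hp (by linarith : q ≤ 0) (by linarith : a < a + b)
  rw [← integral_Ioc_eq_integral_Ioo, ← intervalIntegral.integral_of_le ha.le,
    ← intervalIntegral.integral_add_adjacent_intervals (b := a / 2)
      ((intervalIntegrable_iff_integrableOn_Ioc_of_le (by linarith)).2
        (hint.mono_set (Ioc_subset_Ioc_right (by linarith))))
      ((intervalIntegrable_iff_integrableOn_Ioc_of_le (by linarith)).2
        (hint.mono_set (Ioc_subset_Ioc_left (by linarith)))), add_mul]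
  exact add_le_add (integral_rpow_mul_sub_rpow_le_of_le_half hp hq.le ha hb)
    (integral_rpow_mul_sub_rpow_le_of_half_le (abs_le.2 ⟨hp.le, hp'⟩) hq ha hb)

/-- Lipschitz-type bound for the residues of fBm increments: the Itô-isometry integral
for `Y_n(u) - Y_n(v)` is bounded by `C (1 + k/n)^{2H-1} k^{2H-4} (u-v)^2`. -/
theorem residue_lipschitz_bound (H : ℝ) (hH : H ∈ Set.Ioo (0:ℝ) 1) :
    ∃ C : ℝ, 0 < C ∧
      ∀ (n k : ℕ), 0 < n → 0 < k →
        ∀ u v : ℝ, (n + k : ℝ) ≤ u → u ≤ (n + k : ℝ) + 1 →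
          (n + k : ℝ) ≤ v → v ≤ (n + k : ℝ) + 1 →
          (∫ s in Set.Ioo (0:ℝ) (n:ℝ),
              ((u - s) ^ (H - 3/2) * (u / s) ^ (H - 1/2)
                - (v - s) ^ (H - 3/2) * (v / s) ^ (H - 1/2)) ^ 2)
            ≤ C * (1 + (k:ℝ) / (n:ℝ)) ^ (2*H - 1) * (k:ℝ) ^ (2*H - 4) * (u - v) ^ 2 := by
  set M := 2 ^ (-(2*H - 5)) / (1 - 2*H + 1) + 2 / (-(2*H - 5) - 1)
  have hM : 0 < M := add_pos (div_pos (by positivity) (by linarith [hH.2]))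
    (div_pos two_pos (by linarith [hH.2]))
  refine ⟨49/4 * M, by positivity, fun n k hn hk u v hu hu' hv _ => ?_⟩
  have hn1 : (1 : ℝ) ≤ n := by exact_mod_cast hn
  have hk0 : (0 : ℝ) < k := by exact_mod_cast hk
  set K := 49/4 * (u - v) ^ 2 * ((n : ℝ) + k) ^ (2*H - 1)
  have hpoint : ∀ s ∈ Ioo (0 : ℝ) n, (volterraKernel H u s - volterraKernel H v s) ^ 2
      ≤ K * (s ^ (1 - 2*H) * (n + k - s) ^ (2*H - 5)) := fun s hs =>
    sq_volterraKernel_sub_le hH hs.1 (by linarith [hs.2]) hu (by linarith) hv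
  have hint := ((integrableOn_rpow_mul_sub_rpow (p := 1 - 2*H) (q := 2*H - 5) (by linarith [hH.2])
    (by linarith [hH.2]) (by linarith : (n : ℝ) < n + k)).mono_set Ioo_subset_Ioc_self).const_mul K
  calc ∫ s in Ioo (0 : ℝ) n, (volterraKernel H u s - volterraKernel H v s) ^ 2
      ≤ ∫ s in Ioo (0 : ℝ) n, K * (s ^ (1 - 2*H) * (n + k - s) ^ (2*H - 5)) :=
        integral_mono_of_nonneg (ae_of_all _ fun _ => sq_nonneg _) hint
          ((ae_restrict_iff' measurableSet_Ioo).2 (ae_of_all _ hpoint))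
    _ = K * ∫ s in Ioo (0 : ℝ) n, s ^ (1 - 2*H) * (n + k - s) ^ (2*H - 5) := integral_const_mul _ _
    _ ≤ K * (M * ((n : ℝ) ^ (1 - 2*H) * (k : ℝ) ^ (2*H - 5 + 1))) := by
        gcongr
        exact setIntegral_rpow_mul_sub_rpow_le (by linarith [hH.2]) (by linarith [hH.1])
          (by linarith [hH.2]) (by linarith) hk0
    _ = 49/4 * M * (1 + (k:ℝ) / n) ^ (2*H - 1) * (k:ℝ) ^ (2*H - 4) * (u - v) ^ 2 := by
        rw [one_add_div (by linarith), Real.div_rpow (by positivity) (by linarith),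
          show 1 - 2*H = -(2*H - 1) by ring, Real.rpow_neg (by linarith),
          show 2*H - 5 + 1 = 2*H - 4 by ring]
        ring
end

section
/- For every H ∈ (0,1) there exists a constant C > 0 depending only on H such that for all positive integers n and k and every real u with n+k ≤ u ≤ n+k+1, one has ∫₀ⁿ (u/s)^{2H−1} (u−s)^{2H−3} ds ≤ C (1 + k/n)^{2H−1} k^{2H−2}. -/
/-! With `a = 2 - 2H > 0` the integrand is `(u/s)^(1-a) (u-s)^(-a-1)`, and
`s ↦ s^a (u-s)^(-a)` has derivative `a u s^(a-1) (u-s)^(-a-1)`, so the integral is computed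
exactly: it equals `(n/u)^a (u-n)^(-a) / a`. Since `u - n ≥ k` and `u/n ≥ 1 + k/n ≥ 1`, this is
at most `(1 + k/n)^(1-a) k^(-a) / a`, i.e. the bound holds with `C = 1 / (2 - 2H)`. -/

open MeasureTheory Set

theorem hasDerivAt_rpow_mul_sub_rpow_neg {a u s : ℝ} (hs : 0 < s) (hsu : s < u) :
    HasDerivAt (fun x => x ^ a * (u - x) ^ (-a)) (a * u * (s ^ (a - 1) * (u - s) ^ (-a - 1))) s := by
  have hus : 0 < u - s := sub_pos.mpr hsu
  have hpow : HasDerivAt (fun x => x ^ a) (a * s ^ (a - 1)) s :=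
    Real.hasDerivAt_rpow_const (Or.inl hs.ne')
  have hsub : HasDerivAt (fun x => (u - x) ^ (-a)) (-1 * (-a) * (u - s) ^ (-a - 1)) s :=
    ((hasDerivAt_id s).const_sub u).rpow_const (Or.inl hus.ne')
  refine (hpow.mul hsub).congr_deriv ?_
  have hs_pow : s ^ a = s ^ (a - 1) * s := by
    rw [← Real.rpow_add_one hs.ne', sub_add_cancel]
  have hus_pow : (u - s) ^ (-a) = (u - s) ^ (-a - 1) * (u - s) := by
    rw [← Real.rpow_add_one hus.ne', sub_add_cancel]
  rw [hs_pow, hus_pow]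
  ring

theorem integral_Ioo_rpow_sub_one_mul_sub_rpow {a u N : ℝ} (ha : 0 < a) (hN : 0 ≤ N)
    (hNu : N < u) :
    ∫ s in Ioo 0 N, s ^ (a - 1) * (u - s) ^ (-a - 1) = N ^ a * (u - N) ^ (-a) / (a * u) := by
  have hu : 0 < u := hN.trans_lt hNu
  set g : ℝ → ℝ := fun x => x ^ a * (u - x) ^ (-a)
  have hcont : ContinuousOn g (Icc 0 N) := fun x hx =>
    ((Real.continuousAt_rpow_const x a (Or.inr ha.le)).mul
      ((continuousAt_const.sub continuousAt_id).rpow_const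
        (Or.inl (sub_pos.mpr (hx.2.trans_lt hNu)).ne'))).continuousWithinAt
  have hderiv : ∀ x ∈ Ioo 0 N,
      HasDerivAt g (a * u * (x ^ (a - 1) * (u - x) ^ (-a - 1))) x := fun x hx =>
    hasDerivAt_rpow_mul_sub_rpow_neg hx.1 (hx.2.trans hNu)
  have hderiv_nonneg : ∀ x ∈ Ioo 0 N, 0 ≤ a * u * (x ^ (a - 1) * (u - x) ^ (-a - 1)) :=
    fun x hx => mul_nonneg (by positivity)
      (mul_nonneg (Real.rpow_nonneg hx.1.le _) (Real.rpow_nonneg (by linarith [hx.2]) _))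
  have hFTC := intervalIntegral.integral_eq_sub_of_hasDerivAt_of_le hN hcont hderiv
    ((intervalIntegrable_iff_integrableOn_Ioc_of_le hN).mpr
      (intervalIntegral.integrableOn_deriv_of_nonneg hcont hderiv hderiv_nonneg))
  rw [intervalIntegral.integral_of_le hN, integral_Ioc_eq_integral_Ioo, integral_const_mul] at hFTC
  have hg0 : g 0 = 0 := by simp [g, Real.zero_rpow ha.ne']
  rw [hg0, sub_zero] at hFTC
  rw [eq_div_iff (by positivity), mul_comm, hFTC]

theorem integral_Ioo_div_rpow_mul_sub_rpow {a u N : ℝ} (ha : 0 < a) (hN : 0 ≤ N)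
    (hNu : N < u) :
    ∫ s in Ioo 0 N, (u / s) ^ (1 - a) * (u - s) ^ (-a - 1) = (N / u) ^ a * (u - N) ^ (-a) / a := by
  have hu : 0 < u := hN.trans_lt hNu
  have hsplit : EqOn (fun s => (u / s) ^ (1 - a) * (u - s) ^ (-a - 1))
      (fun s => u ^ (1 - a) * (s ^ (a - 1) * (u - s) ^ (-a - 1))) (Ioo 0 N) := fun s hs => by
    have hs_inv : s ^ (1 - a) = (s ^ (a - 1))⁻¹ := by rw [← Real.rpow_neg hs.1.le, neg_sub]
    dsimp only
    rw [Real.div_rpow hu.le hs.1.le, hs_inv, div_inv_eq_mul]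
    ring
  rw [setIntegral_congr_fun measurableSet_Ioo hsplit, integral_const_mul,
    integral_Ioo_rpow_sub_one_mul_sub_rpow ha hN hNu, Real.div_rpow hN hu.le,
    Real.rpow_sub hu, Real.rpow_one]
  field_simp

theorem div_rpow_mul_sub_rpow_neg_le {a N K u : ℝ} (ha : 0 ≤ a) (hN : 0 < N) (hK : 0 < K)
    (hu : N + K ≤ u) :
    (N / u) ^ a * (u - N) ^ (-a) ≤ (1 + K / N) ^ (1 - a) * K ^ (-a) := by
  have hratio : (N / u) ^ a ≤ (1 + K / N) ^ (-a) := by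
    rw [Real.rpow_neg (x := 1 + K / N) (by positivity), ← Real.inv_rpow (by positivity)]
    refine Real.rpow_le_rpow (div_nonneg hN.le (by linarith)) ?_ ha
    calc N / u ≤ N / (N + K) := by gcongr
      _ = (1 + K / N)⁻¹ := by field_simp
  have hbase : (1 + K / N) ^ (-a) ≤ (1 + K / N) ^ (1 - a) :=
    Real.rpow_le_rpow_of_exponent_le (by simp; positivity) (by linarith)
  have hgap : (u - N) ^ (-a) ≤ K ^ (-a) :=
    Real.rpow_le_rpow_of_nonpos hK (by linarith) (by linarith)
  exact mul_le_mul (hratio.trans hbase) hgap (Real.rpow_nonneg (by linarith) _) (by positivity)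

/-- Variance bound for the residue process: the Itô-isometry integral for `Y_n(u)` is
bounded by `C (1 + k/n)^{2H-1} k^{2H-2}`. -/
theorem residue_variance_bound (H : ℝ) (hH : H ∈ Set.Ioo (0:ℝ) 1) :
    ∃ C : ℝ, 0 < C ∧
      ∀ (n k : ℕ), 0 < n → 0 < k →
        ∀ u : ℝ, (n + k : ℝ) ≤ u → u ≤ (n + k : ℝ) + 1 →
          (∫ s in Set.Ioo (0:ℝ) (n:ℝ), (u / s) ^ (2*H - 1) * (u - s) ^ (2*H - 3))
            ≤ C * (1 + (k:ℝ) / (n:ℝ)) ^ (2*H - 1) * (k:ℝ) ^ (2*H - 2) := by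
  have ha : 0 < 2 - 2 * H := by linarith [hH.2]
  refine ⟨1 / (2 - 2 * H), by positivity, fun n k hn hk u hu _ => ?_⟩
  have hN : (0 : ℝ) < n := by exact_mod_cast hn
  have hK : (0 : ℝ) < k := by exact_mod_cast hk
  have e₁ : 2 * H - 1 = 1 - (2 - 2 * H) := by ring
  have e₂ : 2 * H - 2 = -(2 - 2 * H) := by ring
  have e₃ : 2 * H - 3 = -(2 - 2 * H) - 1 := by ring
  rw [e₁, e₂, e₃, integral_Ioo_div_rpow_mul_sub_rpow ha hN.le (by linarith), mul_assoc,
    one_div_mul_eq_div, div_le_div_iff_of_pos_right ha]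
  exact div_rpow_mul_sub_rpow_neg_le ha.le hN hK hu
end

section
/- For every H ∈ (0,1) there exists a constant C > 0 depending only on H such that for all positive integers n and k and all real u, v with n+k ≤ u ≤ v ≤ n+k+1, one has ∫₀^{n/2} (u/s)^{2H−1} ( (u−s)^{H−3/2} − (v−s)^{H−3/2} )² ds ≤ C (u−v)² k^{2H−4}. -/
/-!
For `s < n/2` we have `u - s ≥ max k (u/2)`, so the mean value theorem bounds the squared
difference by `(3/2 - H)² (v - u)² (u - s)^(2H-5) ≤ 2 (3/2 - H)² (v - u)² k^(2H-4) / u`.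
What remains of the weight `(u/s)^(2H-1)` is `u^(2H-2) s^(1-2H)`, and `s^(1-2H)` integrates
over `(0, n/2)` to at most `u^(2-2H) / (2 - 2H)`, which cancels the power of `u`.
-/

open MeasureTheory Set

lemma abs_rpow_sub_rpow_le_of_neg {x y p : ℝ} (hx : 0 < x) (hxy : x ≤ y) (hp : p < 0) :
    |x ^ p - y ^ p| ≤ -p * x ^ (p - 1) * (y - x) := by
  have hmvt : ‖y ^ p - x ^ p‖ ≤ -p * x ^ (p - 1) * ‖y - x‖ := by
    refine Convex.norm_image_sub_le_of_norm_hasDerivWithin_le (f := fun t : ℝ => t ^ p)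
      (f' := fun t => p * t ^ (p - 1)) (fun t ht => ?_) (fun t ht => ?_) (convex_Icc x y)
      (left_mem_Icc.2 hxy) (right_mem_Icc.2 hxy)
    · exact (Real.hasDerivAt_rpow_const (Or.inl (hx.trans_le ht.1).ne')).hasDerivWithinAt
    · have ht0 : 0 < t := hx.trans_le ht.1
      rw [Real.norm_eq_abs, abs_mul, abs_of_neg hp, abs_of_pos (Real.rpow_pos_of_pos ht0 _)]
      exact mul_le_mul_of_nonneg_left (Real.rpow_le_rpow_of_nonpos hx ht.1 (by linarith))
        (by linarith)
  rwa [Real.norm_eq_abs, Real.norm_eq_abs, abs_sub_comm, abs_of_nonneg (sub_nonneg.2 hxy)]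
    at hmvt

lemma sq_rpow_sub_rpow_le_of_neg {x y p : ℝ} (hx : 0 < x) (hxy : x ≤ y) (hp : p < 0) :
    (x ^ p - y ^ p) ^ 2 ≤ p ^ 2 * (y - x) ^ 2 * x ^ (2 * p - 2) := by
  calc (x ^ p - y ^ p) ^ 2 = |x ^ p - y ^ p| ^ 2 := (sq_abs _).symm
    _ ≤ (-p * x ^ (p - 1) * (y - x)) ^ 2 := by
      gcongr
      exact abs_rpow_sub_rpow_le_of_neg hx hxy hp
    _ = p ^ 2 * (y - x) ^ 2 * x ^ (2 * p - 2) := by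
      rw [show 2 * p - 2 = (p - 1) * (2 : ℕ) by push_cast; ring, Real.rpow_mul_natCast hx.le]
      ring

lemma rpow_sub_one_le_rpow_div {x a b q : ℝ} (ha : 0 < a) (hb : 0 < b) (hax : a ≤ x)
    (hbx : b ≤ x) (hq : q ≤ 0) : x ^ (q - 1) ≤ a ^ q / b := by
  rw [Real.rpow_sub_one (hb.trans_le hbx).ne']
  exact div_le_div₀ (by positivity) (Real.rpow_le_rpow_of_nonpos ha hax hq) hb hbx

lemma integrableOn_Ioo_zero_rpow {r b : ℝ} (hr : -1 < r) (hb : 0 ≤ b) :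
    IntegrableOn (fun s : ℝ => s ^ r) (Ioo 0 b) :=
  (intervalIntegrable_iff_integrableOn_Ioo_of_le hb).1
    (intervalIntegral.intervalIntegrable_rpow' hr)

lemma setIntegral_Ioo_zero_rpow {r b : ℝ} (hr : -1 < r) (hb : 0 ≤ b) :
    ∫ s in Ioo 0 b, s ^ r = b ^ (r + 1) / (r + 1) := by
  rw [← integral_Ioc_eq_integral_Ioo, ← intervalIntegral.integral_of_le hb,
    integral_rpow (Or.inl hr), Real.zero_rpow (by linarith), sub_zero]

lemma I1a_integrand_le {H k u v s : ℝ} (hH : H < 1) (hs : 0 < s) (hk : 0 < k)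
    (hks : k ≤ u - s) (hsu : 2 * s ≤ u) (huv : u ≤ v) :
    (u / s) ^ (2 * H - 1) * ((u - s) ^ (H - 3/2) - (v - s) ^ (H - 3/2)) ^ 2
      ≤ 2 * (3/2 - H) ^ 2 * (u - v) ^ 2 * k ^ (2 * H - 4) * u ^ (2 * H - 2)
        * s ^ (1 - 2 * H) := by
  have hu : 0 < u := by linarith
  have hdiff : ((u - s) ^ (H - 3/2) - (v - s) ^ (H - 3/2)) ^ 2
      ≤ (H - 3/2) ^ 2 * (u - v) ^ 2 * (k ^ (2 * H - 4) / (u / 2)) := by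
    calc _ ≤ (H - 3/2) ^ 2 * (v - s - (u - s)) ^ 2 * (u - s) ^ (2 * (H - 3/2) - 2) :=
          sq_rpow_sub_rpow_le_of_neg (by linarith) (by linarith) (by linarith)
      _ = (H - 3/2) ^ 2 * (u - v) ^ 2 * (u - s) ^ ((2 * H - 4) - 1) := by ring_nf
      _ ≤ _ := by
        gcongr
        exact rpow_sub_one_le_rpow_div hk (by linarith) hks (by linarith) (by linarith)
  calc _ ≤ (u / s) ^ (2 * H - 1)
          * ((H - 3/2) ^ 2 * (u - v) ^ 2 * (k ^ (2 * H - 4) / (u / 2))) := by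
        gcongr
    _ = _ := by
      rw [Real.div_rpow hu.le hs.le, show 1 - 2 * H = -(2 * H - 1) by ring,
        Real.rpow_neg hs.le, show 2 * H - 2 = 2 * H - 1 - 1 by ring,
        Real.rpow_sub_one hu.ne' (2 * H - 1)]
      field_simp
      ring

/-- Bound on the term `I_{1a}`. -/
theorem term_I1a_bound (H : ℝ) (hH : H ∈ Set.Ioo (0:ℝ) 1) :
    ∃ C : ℝ, 0 < C ∧
      ∀ (n k : ℕ), 0 < n → 0 < k →
        ∀ u v : ℝ, (n + k : ℝ) ≤ u → u ≤ v → v ≤ (n + k : ℝ) + 1 →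
          (∫ s in Set.Ioo (0:ℝ) ((n:ℝ)/2),
              (u / s) ^ (2*H - 1) * ((u - s) ^ (H - 3/2) - (v - s) ^ (H - 3/2)) ^ 2)
            ≤ C * (u - v) ^ 2 * (k:ℝ) ^ (2*H - 4) := by
  obtain ⟨hH0, hH1⟩ := hH
  have hH2 : 0 < 2 - 2 * H := by linarith
  have hH3 : 0 < 3/2 - H := by linarith
  refine ⟨2 * (3/2 - H) ^ 2 / (2 - 2 * H), by positivity, ?_⟩
  intro n k _ hk u v hu huv _
  have hk0 : (0 : ℝ) < k := by exact_mod_cast hk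
  have hb : (0 : ℝ) ≤ n / 2 := by positivity
  have hu0 : 0 < u := by linarith
  set A := 2 * (3/2 - H) ^ 2 * (u - v) ^ 2 * (k : ℝ) ^ (2 * H - 4) * u ^ (2 * H - 2)
  calc _ ≤ ∫ s in Ioo 0 ((n : ℝ) / 2), A * s ^ (1 - 2 * H) := by
        refine integral_mono_of_nonneg (ae_restrict_of_forall_mem measurableSet_Ioo fun s hs => ?_)
          ((integrableOn_Ioo_zero_rpow (by linarith) hb).const_mul A)
          (ae_restrict_of_forall_mem measurableSet_Ioo fun s hs =>
            I1a_integrand_le hH1 hs.1 hk0 (by linarith [hs.2]) (by linarith [hs.2]) huv)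
        have := Real.rpow_nonneg (div_nonneg hu0.le hs.1.le) (2 * H - 1)
        positivity
    _ = A * ((n / 2 : ℝ) ^ (2 - 2 * H) / (2 - 2 * H)) := by
        rw [integral_const_mul, setIntegral_Ioo_zero_rpow (by linarith) hb]
        ring_nf
    _ ≤ A * (u ^ (2 - 2 * H) / (2 - 2 * H)) := by
        gcongr
        linarith
    _ = _ := by
      have hcancel : u ^ (2 * H - 2) * u ^ (2 - 2 * H) = 1 := by
        rw [← Real.rpow_add hu0]; norm_num
      linear_combination (2 * (3/2 - H) ^ 2 / (2 - 2 * H) * (u - v) ^ 2 * (k : ℝ) ^ (2 * H - 4))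
        * hcancel
end

section
/- For every H ∈ (0,1) there exists a constant C > 0 depending only on H such that for all positive integers n and k and all real u, v with n+k ≤ u ≤ v ≤ n+k+1, one has ∫_{n/2}^{n} (u/s)^{2H−1} ( (u−s)^{H−3/2} − (v−s)^{H−3/2} )² ds ≤ C (1 + k/n)^{2H−1} k^{2H−4} (u−v)². -/
open MeasureTheory Set

/-! For `s ∈ (n/2, n)` the ratio `u/s` lies between `t = 1 + k/n` and `4t`, so
`(u/s)^(2H-1) ≤ 4 t^(2H-1)` whatever the sign of `2H - 1`. The mean value theorem bounds the
squared difference by `(H - 3/2)^2 (u-s)^(2H-5) (u-v)^2`, and since `u - n ≥ k`, the integral of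
`(u-s)^(2H-5)` over `s < n` is at most `k^(2H-4) / (4 - 2H)`. -/

lemma abs_rpow_sub_rpow_le_s4 {q a b : ℝ} (hq : q ≤ 1) (ha : 0 < a) (hab : a ≤ b) :
    |b ^ q - a ^ q| ≤ |q| * a ^ (q - 1) * (b - a) := by
  have hderiv : ∀ x ∈ Icc a b, HasDerivWithinAt (· ^ q) (q * x ^ (q - 1)) (Icc a b) x :=
    fun x hx => (Real.hasDerivAt_rpow_const (Or.inl (ha.trans_le hx.1).ne')).hasDerivWithinAt
  refine norm_image_sub_le_of_norm_deriv_le_segment' hderiv (fun x hx => ?_) b ⟨hab, le_rfl⟩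
  rw [Real.norm_eq_abs, abs_mul, abs_of_pos (Real.rpow_pos_of_pos (ha.trans_le hx.1) _)]
  exact mul_le_mul_of_nonneg_left (Real.rpow_le_rpow_of_nonpos ha hx.1 (by linarith)) (abs_nonneg q)

lemma sq_rpow_sub_rpow_le {q a b : ℝ} (hq : q ≤ 1) (ha : 0 < a) (hab : a ≤ b) :
    (a ^ q - b ^ q) ^ 2 ≤ q ^ 2 * a ^ (2 * q - 2) * (b - a) ^ 2 := by
  have hpow : a ^ (2 * q - 2) = (a ^ (q - 1)) ^ 2 := by
    rw [sq, ← Real.rpow_add ha]; ring_nf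
  calc (a ^ q - b ^ q) ^ 2 = |b ^ q - a ^ q| ^ 2 := by rw [sq_abs, ← neg_sub, neg_sq]
    _ ≤ (|q| * a ^ (q - 1) * (b - a)) ^ 2 := by gcongr; exact abs_rpow_sub_rpow_le_s4 hq ha hab
    _ = q ^ 2 * a ^ (2 * q - 2) * (b - a) ^ 2 := by rw [hpow, ← sq_abs q]; ring

lemma rpow_le_mul_rpow_of_mem_Icc {p c t x : ℝ} (hp : p ≤ 1) (hc : 1 ≤ c) (ht : 0 < t)
    (hx : x ∈ Icc t (c * t)) : x ^ p ≤ c * t ^ p := by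
  rcases le_or_gt 0 p with hp0 | hp0
  · calc x ^ p ≤ (c * t) ^ p := Real.rpow_le_rpow (ht.le.trans hx.1) hx.2 hp0
      _ = c ^ p * t ^ p := Real.mul_rpow (by linarith) ht.le
      _ ≤ c * t ^ p := by
        gcongr
        exact Real.rpow_le_self_of_one_le hc hp
  · calc x ^ p ≤ t ^ p := Real.rpow_le_rpow_of_nonpos ht hx.1 hp0.le
      _ ≤ c * t ^ p := le_mul_of_one_le_left (by positivity) hc

lemma integrableOn_sub_rpow_Ioo {r a b u : ℝ} (hbu : b < u) :
    IntegrableOn (fun s => (u - s) ^ r) (Ioo a b) := by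
  refine (ContinuousOn.integrableOn_Icc ?_).mono_set Ioo_subset_Icc_self
  exact (continuousOn_const.sub continuousOn_id).rpow_const
    fun s hs => Or.inl (sub_pos.mpr (hs.2.trans_lt hbu)).ne'

lemma setIntegral_Ioo_sub_rpow_le {r a b u : ℝ} (hr : r < -1) (hab : a ≤ b) (hbu : b < u) :
    ∫ s in Ioo a b, (u - s) ^ r ≤ (u - b) ^ (r + 1) / -(r + 1) := by
  have heval : ∫ s in Ioo a b, (u - s) ^ r
      = ((u - a) ^ (r + 1) - (u - b) ^ (r + 1)) / (r + 1) := by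
    rw [← integral_Ioc_eq_integral_Ioo, ← intervalIntegral.integral_of_le hab,
      intervalIntegral.integral_comp_sub_left (· ^ r) u,
      integral_rpow (Or.inr ⟨hr.ne, notMem_uIcc_of_lt (by linarith) (by linarith)⟩)]
  rw [heval, ← neg_div_neg_eq, neg_sub]
  refine div_le_div_of_nonneg_right ?_ (by linarith)
  linarith [Real.rpow_nonneg (by linarith : 0 ≤ u - a) (r + 1)]

lemma div_mem_Icc_of_mem_Ioo {n k : ℕ} (hn : 0 < n) {u s : ℝ} (hu : (n + k : ℝ) ≤ u)
    (hu' : u ≤ (n + k : ℝ) + 1) (hs : s ∈ Ioo ((n : ℝ) / 2) n) :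
    u / s ∈ Icc (1 + (k : ℝ) / n) (4 * (1 + (k : ℝ) / n)) := by
  have hn' : (1 : ℝ) ≤ n := by exact_mod_cast hn
  have hs0 : 0 < s := by linarith [hs.1]
  have hkn : 1 + (k : ℝ) / n = (n + k) / n := by field_simp
  rw [hkn, mul_div_assoc', mem_Icc, div_le_div_iff₀ (by positivity) hs0,
    div_le_div_iff₀ hs0 (by positivity)]
  constructor <;> nlinarith [hs.1, hs.2, k.cast_nonneg (α := ℝ)]

lemma integrand_I1b_le {H : ℝ} (hH : H < 1) {n k : ℕ} (hn : 0 < n) {u v s : ℝ}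
    (hu : (n + k : ℝ) ≤ u) (huv : u ≤ v) (hv : v ≤ (n + k : ℝ) + 1)
    (hs : s ∈ Ioo ((n : ℝ) / 2) n) :
    (u / s) ^ (2*H - 1) * ((u - s) ^ (H - 3/2) - (v - s) ^ (H - 3/2)) ^ 2
      ≤ 4 * (1 + (k : ℝ) / n) ^ (2*H - 1) * (H - 3/2) ^ 2 * (u - v) ^ 2
        * (u - s) ^ (2*H - 5) := by
  have hweight := rpow_le_mul_rpow_of_mem_Icc (p := 2*H - 1) (by linarith) (by norm_num)
    (by positivity) (div_mem_Icc_of_mem_Ioo hn hu (huv.trans hv) hs)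
  have hus : 0 < u - s := by linarith [hs.2, k.cast_nonneg (α := ℝ)]
  have hdiff := sq_rpow_sub_rpow_le (q := H - 3/2) (by linarith) hus (sub_le_sub_right huv s)
  rw [show 2 * (H - 3/2) - 2 = 2*H - 5 by ring, show v - s - (u - s) = -(u - v) by ring,
    neg_sq] at hdiff
  calc _ ≤ 4 * (1 + (k : ℝ) / n) ^ (2*H - 1)
          * ((H - 3/2) ^ 2 * (u - s) ^ (2*H - 5) * (u - v) ^ 2) :=
        mul_le_mul hweight hdiff (sq_nonneg _) (by positivity)
    _ = _ := by ring

/-- Bound on the term `I_{1b}`. -/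
theorem term_I1b_bound (H : ℝ) (hH : H ∈ Set.Ioo (0:ℝ) 1) :
    ∃ C : ℝ, 0 < C ∧
      ∀ (n k : ℕ), 0 < n → 0 < k →
        ∀ u v : ℝ, (n + k : ℝ) ≤ u → u ≤ v → v ≤ (n + k : ℝ) + 1 →
          (∫ s in Set.Ioo ((n:ℝ)/2) (n:ℝ),
              (u / s) ^ (2*H - 1) * ((u - s) ^ (H - 3/2) - (v - s) ^ (H - 3/2)) ^ 2)
            ≤ C * (1 + (k:ℝ) / (n:ℝ)) ^ (2*H - 1) * (k:ℝ) ^ (2*H - 4) * (u - v) ^ 2 := by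
  have hH1 : H < 1 := hH.2
  refine ⟨4 * (H - 3/2) ^ 2 / (4 - 2*H), div_pos (by nlinarith) (by linarith), ?_⟩
  intro n k hn hk u v hu huv hv
  set A := 4 * (1 + (k:ℝ) / n) ^ (2*H - 1) * (H - 3/2) ^ 2 * (u - v) ^ 2
  have hk' : (1:ℝ) ≤ k := by exact_mod_cast hk
  have hnu : (n:ℝ) < u := by linarith
  have htail :
      ∫ s in Ioo ((n:ℝ)/2) n, (u - s) ^ (2*H - 5) ≤ (k:ℝ) ^ (2*H - 4) / (4 - 2*H) := by
    have h := setIntegral_Ioo_sub_rpow_le (r := 2*H - 5) (by linarith)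
      (half_le_self n.cast_nonneg) hnu
    rw [show 2*H - 5 + 1 = 2*H - 4 by ring, show -(2*H - 4) = 4 - 2*H by ring] at h
    refine h.trans (div_le_div_of_nonneg_right ?_ (by linarith))
    exact Real.rpow_le_rpow_of_nonpos (by linarith) (by linarith) (by linarith)
  calc _ ≤ ∫ s in Ioo ((n:ℝ)/2) n, A * (u - s) ^ (2*H - 5) :=
        integral_mono_of_nonneg
          ((ae_restrict_iff' measurableSet_Ioo).mpr (ae_of_all _ fun s hs =>
            mul_nonneg (Real.rpow_nonneg (div_nonneg (by linarith) (by linarith [hs.1])) _)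
              (sq_nonneg _)))
          ((integrableOn_sub_rpow_Ioo hnu).const_mul A)
          ((ae_restrict_iff' measurableSet_Ioo).mpr
            (ae_of_all _ fun s => integrand_I1b_le hH1 hn hu huv hv))
    _ = A * ∫ s in Ioo ((n:ℝ)/2) n, (u - s) ^ (2*H - 5) := integral_const_mul _ _
    _ ≤ A * ((k:ℝ) ^ (2*H - 4) / (4 - 2*H)) := by gcongr
    _ = _ := by ring
end

section
/- For every H ∈ (0,1) there exists a constant C > 0 depending only on H such that for all positive integers n and k and all real u, v with n+k ≤ u ≤ v ≤ n+k+1, one has ∫₀^{n/2} (v−s)^{2H−3} ( (u/s)^{H−1/2} − (v/s)^{H−1/2} )² ds ≤ C (u−v)² k^{2H−4}. -/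
open MeasureTheory Set

/-!
With `a = H - 1/2`, pulling `s` out gives `((u/s)^a - (v/s)^a)^2 = (u^a - v^a)^2 s^(1-2H)`, and the
mean value theorem bounds `(u^a - v^a)^2` by `a^2 u^(2H-3) (v-u)^2`. On `(0, n/2)` the weight
`(v-s)^(2H-3)` is at most `(v-n/2)^(2H-3)`, and `s^(1-2H)` is integrable there because `H < 1`, with
integral `(n/2)^(2-2H)/(2-2H)`. Finally `v - n/2 ≥ n/2`, `v - n/2 ≥ k` and `u ≥ k` give
`(v-n/2)^(2H-3) u^(2H-3) (n/2)^(2-2H) ≤ (n/2 / (v-n/2))^(2-2H) k^(-1) k^(2H-3) ≤ k^(2H-4)`.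
-/

theorem sq_rpow_sub_rpow_le_s5 {a u v : ℝ} (ha : a ≤ 1) (hu : 0 < u) (huv : u ≤ v) :
    (u ^ a - v ^ a) ^ 2 ≤ a ^ 2 * u ^ (2 * a - 2) * (v - u) ^ 2 := by
  have hderiv : ∀ x ∈ Icc u v,
      HasDerivWithinAt (fun x : ℝ => x ^ a) (a * x ^ (a - 1)) (Icc u v) x :=
    fun x hx => (Real.hasDerivAt_rpow_const (Or.inl (hu.trans_le hx.1).ne')).hasDerivWithinAt
  have hbound : ∀ x ∈ Ico u v, ‖a * x ^ (a - 1)‖ ≤ |a| * u ^ (a - 1) := fun x hx => by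
    rw [norm_mul, Real.norm_eq_abs, Real.norm_of_nonneg (Real.rpow_nonneg (hu.le.trans hx.1) _)]
    exact mul_le_mul_of_nonneg_left (Real.rpow_le_rpow_of_nonpos hu hx.1 (by linarith))
      (abs_nonneg a)
  have hmvt := norm_image_sub_le_of_norm_deriv_le_segment' hderiv hbound v ⟨huv, le_rfl⟩
  rw [Real.norm_eq_abs, abs_sub_comm] at hmvt
  calc (u ^ a - v ^ a) ^ 2 = |u ^ a - v ^ a| ^ 2 := (sq_abs _).symm
    _ ≤ (|a| * u ^ (a - 1) * (v - u)) ^ 2 := by gcongr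
    _ = a ^ 2 * u ^ (2 * a - 2) * (v - u) ^ 2 := by
      rw [mul_pow, mul_pow, sq_abs, ← Real.rpow_mul_natCast hu.le]
      ring_nf

theorem div_rpow_sub_div_rpow_sq {a u v s : ℝ} (hu : 0 ≤ u) (hv : 0 ≤ v) (hs : 0 < s) :
    ((u / s) ^ a - (v / s) ^ a) ^ 2 = (u ^ a - v ^ a) ^ 2 * s ^ (-2 * a) := by
  rw [Real.div_rpow hu hs.le, Real.div_rpow hv hs.le, ← sub_div, div_pow, div_eq_mul_inv,
    ← Real.rpow_mul_natCast hs.le, ← Real.rpow_neg hs.le]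
  ring_nf

theorem setIntegral_Ioo_le_of_le_mul_rpow {f : ℝ → ℝ} {c D r : ℝ} (hc : 0 ≤ c) (hr : -1 < r)
    (hf : AEStronglyMeasurable f (volume.restrict (Ioo 0 c)))
    (hf0 : ∀ s ∈ Ioo 0 c, 0 ≤ f s) (hfle : ∀ s ∈ Ioo 0 c, f s ≤ D * s ^ r) :
    ∫ s in Ioo 0 c, f s ≤ D * (c ^ (r + 1) / (r + 1)) := by
  have hg : IntegrableOn (fun s => D * s ^ r) (Ioo 0 c) :=
    ((intervalIntegrable_iff_integrableOn_Ioo_of_le hc).mp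
      (intervalIntegral.intervalIntegrable_rpow' hr)).const_mul D
  have hfint : IntegrableOn f (Ioo 0 c) := by
    refine hg.mono' hf ((ae_restrict_iff' measurableSet_Ioo).mpr (ae_of_all _ fun s hs => ?_))
    rw [Real.norm_of_nonneg (hf0 s hs)]
    exact hfle s hs
  calc ∫ s in Ioo 0 c, f s ≤ ∫ s in Ioo 0 c, D * s ^ r :=
        setIntegral_mono_on hfint hg measurableSet_Ioo hfle
    _ = D * (c ^ (r + 1) / (r + 1)) := by
      rw [← integral_Ioc_eq_integral_Ioo, ← intervalIntegral.integral_of_le hc,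
        intervalIntegral.integral_const_mul, integral_rpow (Or.inl hr),
        Real.zero_rpow (by linarith), sub_zero]

theorem rpow_mul_rpow_mul_rpow_le {H c w u k : ℝ} (hH : H ≤ 1) (hc : 0 ≤ c) (hcw : c ≤ w)
    (hk : 0 < k) (hkw : k ≤ w) (hku : k ≤ u) :
    w ^ (2 * H - 3) * u ^ (2 * H - 3) * c ^ (2 - 2 * H) ≤ k ^ (2 * H - 4) := by
  have hw : 0 < w := hk.trans_le hkw
  have hsplit : w ^ (2 * H - 3) * c ^ (2 - 2 * H) = (c / w) ^ (2 - 2 * H) * w⁻¹ := by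
    rw [Real.div_rpow hc hw.le, div_mul_eq_mul_div, mul_comm, ← Real.rpow_neg_one,
      mul_div_assoc, ← Real.rpow_sub hw]
    ring_nf
  have hratio : (c / w) ^ (2 - 2 * H) ≤ 1 :=
    Real.rpow_le_one (div_nonneg hc hw.le) ((div_le_one hw).mpr hcw) (by linarith)
  calc w ^ (2 * H - 3) * u ^ (2 * H - 3) * c ^ (2 - 2 * H)
      = (c / w) ^ (2 - 2 * H) * w⁻¹ * u ^ (2 * H - 3) := by rw [← hsplit]; ring
    _ ≤ 1 * k⁻¹ * k ^ (2 * H - 3) := by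
      have hu_pow : u ^ (2 * H - 3) ≤ k ^ (2 * H - 3) :=
        Real.rpow_le_rpow_of_nonpos hk hku (by linarith)
      have hu : 0 < u := hk.trans_le hku
      gcongr
    _ = k ^ (2 * H - 4) := by
      rw [one_mul, ← Real.rpow_neg_one, ← Real.rpow_add hk]
      ring_nf

theorem integrand_I2a_le {H u v c s : ℝ} (hH : H ≤ 3 / 2) (hs : s ∈ Ioo 0 c) (hcv : c < v)
    (hu : 0 < u) (huv : u ≤ v) :
    (v - s) ^ (2 * H - 3) * ((u / s) ^ (H - 1 / 2) - (v / s) ^ (H - 1 / 2)) ^ 2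
      ≤ (H - 1 / 2) ^ 2 * (v - u) ^ 2 * (v - c) ^ (2 * H - 3) * u ^ (2 * H - 3)
        * s ^ (1 - 2 * H) := by
  obtain ⟨hs0, hsc⟩ := hs
  have hmvt := sq_rpow_sub_rpow_le_s5 (a := H - 1 / 2) (by linarith) hu huv
  have hvs : (v - s) ^ (2 * H - 3) ≤ (v - c) ^ (2 * H - 3) :=
    Real.rpow_le_rpow_of_nonpos (by linarith) (by linarith) (by linarith)
  rw [div_rpow_sub_div_rpow_sq hu.le (hu.le.trans huv) hs0]
  calc _ ≤ (v - c) ^ (2 * H - 3) * ((H - 1 / 2) ^ 2 * u ^ (2 * (H - 1 / 2) - 2) * (v - u) ^ 2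
          * s ^ (-2 * (H - 1 / 2))) := by
        have : 0 ≤ v - s := by linarith
        gcongr
    _ = _ := by ring_nf

/-- Bound on the term `I_{2a}`. -/
theorem term_I2a_bound (H : ℝ) (hH : H ∈ Set.Ioo (0:ℝ) 1) :
    ∃ C : ℝ, 0 < C ∧
      ∀ (n k : ℕ), 0 < n → 0 < k →
        ∀ u v : ℝ, (n + k : ℝ) ≤ u → u ≤ v → v ≤ (n + k : ℝ) + 1 →
          (∫ s in Set.Ioo (0:ℝ) ((n:ℝ)/2),
              (v - s) ^ (2*H - 3) * ((u / s) ^ (H - 1/2) - (v / s) ^ (H - 1/2)) ^ 2)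
            ≤ C * (u - v) ^ 2 * (k:ℝ) ^ (2*H - 4) := by
  obtain ⟨-, hH1⟩ := hH
  have hH2 : 0 < 2 - 2 * H := by linarith
  refine ⟨((H - 1 / 2) ^ 2 + 1) / (2 - 2 * H), by positivity, ?_⟩
  intro n k _ hk u v hu huv _
  set c : ℝ := n / 2 with hc_def
  have hk0 : (0 : ℝ) < k := by exact_mod_cast hk
  have hc : 0 ≤ c := by positivity
  have hku : (k : ℝ) ≤ u := by linarith [n.cast_nonneg (α := ℝ)]
  have hcw : c ≤ v - c := by linarith
  have hkw : (k : ℝ) ≤ v - c := by linarith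
  have hu0 : 0 < u := hk0.trans_le hku
  have hint := setIntegral_Ioo_le_of_le_mul_rpow hc (r := 1 - 2 * H) (by linarith)
    (by fun_prop) (fun s hs => mul_nonneg (Real.rpow_nonneg (by linarith [hs.2]) _) (sq_nonneg _))
    (fun s hs => integrand_I2a_le (by linarith) hs (by linarith) hu0 huv)
  calc _ ≤ _ := hint
    _ = (H - 1 / 2) ^ 2 / (2 - 2 * H) * (u - v) ^ 2
          * ((v - c) ^ (2 * H - 3) * u ^ (2 * H - 3) * c ^ (2 - 2 * H)) := by ring_nf
    _ ≤ (H - 1 / 2) ^ 2 / (2 - 2 * H) * (u - v) ^ 2 * (k : ℝ) ^ (2 * H - 4) := by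
        gcongr
        exact rpow_mul_rpow_mul_rpow_le hH1.le hc hcw hk0 hkw hku
    _ ≤ _ := by gcongr; linarith
end

section
/- For every H ∈ (0,1) there exists a constant C > 0 depending only on H such that for all positive integers n and k and all real u, v with n+k ≤ u ≤ v ≤ n+k+1, one has ∫_{n/2}^{n} (v−s)^{2H−3} ( (u/s)^{H−1/2} − (v/s)^{H−1/2} )² ds ≤ C (1 + k/n)^{2H−1} k^{2H−4} (u−v)². -/
/-!
On `(n/2, n)` we have `v - s ≥ k`, so the singular factor is at most `k^(2H-3)`, while
`u/s ≥ 1 + k/n`, so by the mean value theorem for `x ↦ x^(H-1/2)` the squared difference is at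
most `(H-1/2)² (1+k/n)^(2H-3) ((v-u)/s)²` with `1/s < 2/n`. Integrating this constant bound over
an interval of length `n/2` leaves `k^(2H-3) (1+k/n)^(2H-3) / n`, which is at most
`(1+k/n)^(2H-1) k^(2H-4)` because `k/n ≤ (1+k/n)²`.
-/

open MeasureTheory Set

lemma abs_rpow_sub_rpow_le_of_le {p m a b : ℝ} (hp : p ≤ 1) (hm : 0 < m) (hma : m ≤ a)
    (hab : a ≤ b) : |a ^ p - b ^ p| ≤ |p| * m ^ (p - 1) * (b - a) := by
  have hderiv : ∀ x ∈ Icc a b,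
      HasDerivWithinAt (fun y : ℝ => y ^ p) (p * x ^ (p - 1)) (Icc a b) x := fun x hx =>
    (Real.hasDerivAt_rpow_const (Or.inl (hm.trans_le (hma.trans hx.1)).ne')).hasDerivWithinAt
  have hbound : ∀ x ∈ Icc a b, ‖p * x ^ (p - 1)‖ ≤ |p| * m ^ (p - 1) := by
    intro x hx
    have hx0 : 0 < x := hm.trans_le (hma.trans hx.1)
    rw [norm_mul, Real.norm_eq_abs, Real.norm_of_nonneg (Real.rpow_nonneg hx0.le _)]
    exact mul_le_mul_of_nonneg_left
      (Real.rpow_le_rpow_of_nonpos hm (hma.trans hx.1) (by linarith)) (abs_nonneg p)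
  have := (convex_Icc a b).norm_image_sub_le_of_norm_hasDerivWithin_le hderiv hbound
    (left_mem_Icc.2 hab) (right_mem_Icc.2 hab)
  rwa [Real.norm_eq_abs, Real.norm_eq_abs, abs_sub_comm, abs_of_nonneg (sub_nonneg.2 hab)]
    at this

lemma sq_rpow_sub_rpow_le_of_le {p m a b : ℝ} (hp : p ≤ 1) (hm : 0 < m) (hma : m ≤ a)
    (hab : a ≤ b) : (a ^ p - b ^ p) ^ 2 ≤ p ^ 2 * m ^ (2 * (p - 1)) * (b - a) ^ 2 := by
  rw [mul_comm 2, Real.rpow_mul hm.le, Real.rpow_two]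
  simpa only [sq_abs, mul_pow] using
    pow_le_pow_left₀ (abs_nonneg _) (abs_rpow_sub_rpow_le_of_le hp hm hma hab) 2

lemma setIntegral_Ioo_le_of_norm_le {f : ℝ → ℝ} {a b M : ℝ} (hab : a ≤ b)
    (hf : ∀ x ∈ Ioo a b, ‖f x‖ ≤ M) : ∫ x in Ioo a b, f x ≤ M * (b - a) := by
  have h := norm_setIntegral_le_of_norm_le_const (μ := volume) measure_Ioo_lt_top hf
  rw [Real.volume_real_Ioo_of_le hab] at h
  exact (le_abs_self _).trans h

lemma rpow_mul_one_add_div_rpow_div_le {H k n : ℝ} (hk : 0 < k) (hn : 0 < n) :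
    k ^ (2 * H - 3) * (1 + k / n) ^ (2 * H - 3) / n
      ≤ (1 + k / n) ^ (2 * H - 1) * k ^ (2 * H - 4) := by
  set m := 1 + k / n
  have hkn : 0 ≤ k / n := by positivity
  have hk_pow : k ^ (2 * H - 3) = k ^ (2 * H - 4) * k := by
    rw [← Real.rpow_add_one hk.ne']; ring_nf
  have hm_pow : m ^ (2 * H - 1) = m ^ (2 * H - 3) * m ^ 2 := by
    rw [← Real.rpow_natCast, ← Real.rpow_add (by positivity)]; ring_nf
  calc k ^ (2 * H - 3) * m ^ (2 * H - 3) / n = k ^ (2 * H - 4) * m ^ (2 * H - 3) * (k / n) := by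
        rw [hk_pow]; ring
    _ ≤ k ^ (2 * H - 4) * m ^ (2 * H - 3) * m ^ 2 := by gcongr; nlinarith
    _ = m ^ (2 * H - 1) * k ^ (2 * H - 4) := by rw [hm_pow]; ring

lemma rpow_mul_sq_rpow_div_sub_rpow_div_le {H n k u v s : ℝ} (hH : H < 1) (hn : 0 < n)
    (hk : 0 < k) (hu : n + k ≤ u) (huv : u ≤ v) (hs : s ∈ Ioo (n / 2) n) :
    (v - s) ^ (2 * H - 3) * ((u / s) ^ (H - 1 / 2) - (v / s) ^ (H - 1 / 2)) ^ 2
      ≤ 4 * (H - 1 / 2) ^ 2 * (v - u) ^ 2 *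
          (k ^ (2 * H - 3) * (1 + k / n) ^ (2 * H - 3) / n ^ 2) := by
  obtain ⟨hs_gt, hs_lt⟩ := hs
  have hs0 : 0 < s := by linarith
  have hm : 0 < 1 + k / n := by positivity
  have hdist : (v - s) ^ (2 * H - 3) ≤ k ^ (2 * H - 3) :=
    Real.rpow_le_rpow_of_nonpos hk (by linarith) (by linarith)
  have hm_le : 1 + k / n ≤ u / s := by
    rw [le_div_iff₀ hs0]
    calc (1 + k / n) * s ≤ (1 + k / n) * n := by gcongr
      _ = n + k := by field_simp
      _ ≤ u := hu
  have hslope : v / s - u / s ≤ 2 * (v - u) / n := by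
    rw [div_sub_div_same, div_le_div_iff₀ hs0 hn]
    nlinarith
  have hdiff := sq_rpow_sub_rpow_le_of_le (p := H - 1 / 2) (by linarith) hm hm_le
    (div_le_div_of_nonneg_right huv hs0.le)
  rw [show 2 * (H - 1 / 2 - 1) = 2 * H - 3 by ring] at hdiff
  calc (v - s) ^ (2 * H - 3) * ((u / s) ^ (H - 1 / 2) - (v / s) ^ (H - 1 / 2)) ^ 2
      ≤ k ^ (2 * H - 3) *
          ((H - 1 / 2) ^ 2 * (1 + k / n) ^ (2 * H - 3) * (2 * (v - u) / n) ^ 2) := by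
        have hquot : u / s ≤ v / s := div_le_div_of_nonneg_right huv hs0.le
        gcongr
        exact hdiff.trans (by gcongr)
    _ = 4 * (H - 1 / 2) ^ 2 * (v - u) ^ 2 *
          (k ^ (2 * H - 3) * (1 + k / n) ^ (2 * H - 3) / n ^ 2) := by
        ring

/-- Bound on the term `I_{2b}`. -/
theorem term_I2b_bound (H : ℝ) (hH : H ∈ Set.Ioo (0:ℝ) 1) :
    ∃ C : ℝ, 0 < C ∧
      ∀ (n k : ℕ), 0 < n → 0 < k →
        ∀ u v : ℝ, (n + k : ℝ) ≤ u → u ≤ v → v ≤ (n + k : ℝ) + 1 →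
          (∫ s in Set.Ioo ((n:ℝ)/2) (n:ℝ),
              (v - s) ^ (2*H - 3) * ((u / s) ^ (H - 1/2) - (v / s) ^ (H - 1/2)) ^ 2)
            ≤ C * (1 + (k:ℝ) / (n:ℝ)) ^ (2*H - 1) * (k:ℝ) ^ (2*H - 4) * (u - v) ^ 2 := by
  refine ⟨2 * (H - 1 / 2) ^ 2 + 1, by positivity, fun n k hn hk u v hu huv _ => ?_⟩
  have hn0 : (0 : ℝ) < n := by exact_mod_cast hn
  have hk0 : (0 : ℝ) < k := by exact_mod_cast hk
  have hint := setIntegral_Ioo_le_of_norm_le (by linarith) fun s hs =>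
    (Real.norm_of_nonneg (mul_nonneg (Real.rpow_nonneg (by linarith [hs.2]) _)
      (sq_nonneg _))).trans_le (rpow_mul_sq_rpow_div_sub_rpow_div_le hH.2 hn0 hk0 hu huv hs)
  refine hint.trans ?_
  have hpow := rpow_mul_one_add_div_rpow_div_le (H := H) hk0 hn0
  set K := (k : ℝ) ^ (2 * H - 3) * (1 + k / n) ^ (2 * H - 3)
  calc 4 * (H - 1 / 2) ^ 2 * (v - u) ^ 2 * (K / n ^ 2) * (n - n / 2)
      = 2 * (H - 1 / 2) ^ 2 * (u - v) ^ 2 * (K / n) := by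
        field_simp; ring
    _ ≤ (2 * (H - 1 / 2) ^ 2 + 1) * (u - v) ^ 2 *
          ((1 + k / n) ^ (2 * H - 1) * (k : ℝ) ^ (2 * H - 4)) := by
        gcongr
        linarith
    _ = _ := by ring
end

section
/- For every H ∈ (0,1) there exists a constant C > 0 depending only on H such that for all positive integers n and k and every real u with n+k ≤ u ≤ n+k+1, one has ∫₀^{n/2} (u/s)^{2H−1} (u−s)^{2H−3} ds ≤ C (1 + k/n)^{2H−2} k^{2H−2}. -/
/-!
On `(0, n/2)` we have `u - s ≥ u/2`, so the negative power `(u - s)^(2H-3)` is at most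
`(u/2)^(2H-3)`; what remains is `u^(2H-1) ∫₀^{n/2} s^(1-2H) ds`, finite because `H < 1`.
The result is `u^(4H-4) n^(2-2H) / (1 - H)`, and `u ≥ n + k`, `u ≥ k` turn `u^(4H-4)` into
`(n + k)^(2H-2) k^(2H-2)`.
-/

open MeasureTheory Set

lemma rpow_div_mul_sub_rpow_le {p q s u : ℝ} (hq : q ≤ 0) (hs : 0 < s) (hsu : 2 * s ≤ u) :
    (u / s) ^ p * (u - s) ^ q ≤ 2 ^ (-q) * u ^ (p + q) * s ^ (-p) := by
  have hu : 0 < u := by linarith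
  have hus : (u - s) ^ q ≤ (u / 2) ^ q :=
    Real.rpow_le_rpow_of_nonpos (by positivity) (by linarith) hq
  calc (u / s) ^ p * (u - s) ^ q ≤ (u / s) ^ p * (u / 2) ^ q := by gcongr
    _ = 2 ^ (-q) * u ^ (p + q) * s ^ (-p) := by
      rw [Real.div_rpow hu.le hs.le, Real.div_rpow hu.le zero_le_two, Real.rpow_add hu,
        Real.rpow_neg hs.le, Real.rpow_neg zero_le_two]
      ring

lemma setIntegral_Ioo_zero_rpow_div_mul_sub_rpow_le {p q b u : ℝ} (hp : p < 1) (hq : q ≤ 0)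
    (hb : 0 ≤ b) (hbu : 2 * b ≤ u) :
    ∫ s in Ioo 0 b, (u / s) ^ p * (u - s) ^ q ≤
      2 ^ (-q) * u ^ (p + q) * (b ^ (1 - p) / (1 - p)) := by
  have hr : -1 < -p := by linarith
  have hint : IntegrableOn (fun s : ℝ ↦ s ^ (-p)) (Ioo 0 b) :=
    (intervalIntegrable_iff_integrableOn_Ioo_of_le hb).1
      (intervalIntegral.intervalIntegrable_rpow' hr)
  calc ∫ s in Ioo 0 b, (u / s) ^ p * (u - s) ^ q
      ≤ ∫ s in Ioo 0 b, 2 ^ (-q) * u ^ (p + q) * s ^ (-p) := by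
        refine setIntegral_mono_of_nonneg (fun s hs ↦ ?_) (fun s hs ↦ ?_) (hint.const_mul _)
        · have hu : 0 < u := by linarith [hs.1, hs.2]
          exact mul_nonneg (Real.rpow_nonneg (div_pos hu hs.1).le _)
            (Real.rpow_nonneg (by linarith [hs.2]) _)
        · exact rpow_div_mul_sub_rpow_le hq hs.1 (by linarith [hs.2])
    _ = 2 ^ (-q) * u ^ (p + q) * (b ^ (1 - p) / (1 - p)) := by
        rw [integral_const_mul, setIntegral_Ioo_zero_rpow hr hb, neg_add_eq_sub]

lemma rpow_two_mul_mul_rpow_neg_le {e n k u : ℝ} (he : e ≤ 0) (hn : 0 < n) (hk : 0 < k)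
    (hu : n + k ≤ u) : u ^ (2 * e) * n ^ (-e) ≤ (1 + k / n) ^ e * k ^ e := by
  have hu0 : 0 < u := by linarith
  calc u ^ (2 * e) * n ^ (-e) = u ^ e * u ^ e * n ^ (-e) := by
        rw [two_mul, Real.rpow_add hu0]
    _ ≤ (n + k) ^ e * k ^ e * n ^ (-e) := by
        refine mul_le_mul_of_nonneg_right (mul_le_mul ?_ ?_ (by positivity) (by positivity))
          (by positivity)
        · exact Real.rpow_le_rpow_of_nonpos (by positivity) hu he
        · exact Real.rpow_le_rpow_of_nonpos hk (by linarith) he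
    _ = (1 + k / n) ^ e * k ^ e := by
        rw [show 1 + k / n = (n + k) / n by field_simp, Real.div_rpow (by positivity) hn.le,
          Real.rpow_neg hn.le]
        ring

/-- Bound on the term `J₁`. -/
theorem term_J1_bound (H : ℝ) (hH : H ∈ Set.Ioo (0:ℝ) 1) :
    ∃ C : ℝ, 0 < C ∧
      ∀ (n k : ℕ), 0 < n → 0 < k →
        ∀ u : ℝ, (n + k : ℝ) ≤ u → u ≤ (n + k : ℝ) + 1 →
          (∫ s in Set.Ioo (0:ℝ) ((n:ℝ)/2), (u / s) ^ (2*H - 1) * (u - s) ^ (2*H - 3))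
            ≤ C * (1 + (k:ℝ) / (n:ℝ)) ^ (2*H - 2) * (k:ℝ) ^ (2*H - 2) := by
  have hH1 : 0 < 1 - H := sub_pos.2 hH.2
  refine ⟨1 / (1 - H), by positivity, fun n k hn hk u hu _ ↦ ?_⟩
  have hn' : (0:ℝ) < n := Nat.cast_pos.2 hn
  have hk' : (0:ℝ) < k := Nat.cast_pos.2 hk
  have hdyadic : (2:ℝ) ^ (-(2*H - 3)) = 2 * 2 ^ (1 - (2*H - 1)) := by
    rw [← Real.rpow_one_add' zero_le_two (by linarith)]; ring_nf
  calc (∫ s in Ioo (0:ℝ) (n/2), (u / s) ^ (2*H - 1) * (u - s) ^ (2*H - 3))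
      ≤ 2 ^ (-(2*H - 3)) * u ^ (2*H - 1 + (2*H - 3)) *
          ((n/2) ^ (1 - (2*H - 1)) / (1 - (2*H - 1))) :=
        setIntegral_Ioo_zero_rpow_div_mul_sub_rpow_le (by linarith) (by linarith) (by positivity)
          (by linarith)
    _ = 1 / (1 - H) * (u ^ (2 * (2*H - 2)) * n ^ (-(2*H - 2))) := by
        rw [hdyadic, Real.div_rpow hn'.le zero_le_two,
          show 2*H - 1 + (2*H - 3) = 2 * (2*H - 2) by ring,
          show 1 - (2*H - 1) = 2 * (1 - H) by ring, show -(2*H - 2) = 2 * (1 - H) by ring]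
        field_simp
    _ ≤ 1 / (1 - H) * ((1 + k / n) ^ (2*H - 2) * k ^ (2*H - 2)) := by
        gcongr 1 / (1 - H) * ?_
        exact rpow_two_mul_mul_rpow_neg_le (by linarith) hn' hk' hu
    _ = _ := by ring
end

section
/- Let m ≥ 1 be a natural number. The number of sequences x : {1,…,2m} → {−1,+1} such that the partial sums S_k = x_1 + ⋯ + x_k satisfy S_k ≠ 0 for all 1 ≤ k ≤ 2m−1 and S_{2m} = 0 equals (1/(2m−1)) · binom(2m, m). -/
/-!
Multiplying a first-return walk by the sign of its first step makes all its partial sums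
positive strictly before time `2m`: it becomes a nested Dyck word `U q D`, with `q` an arbitrary
Dyck word of semilength `m - 1`. So there are `2 · catalan (m - 1)` such walks, and
`(2m - 1) · 2 · catalan (m - 1) = binom(2m, m)`.
-/

open DyckStep List

namespace DyckStep

def toInt : DyckStep → ℤ
  | U => 1
  | D => -1

lemma toInt_eq_one_or (s : DyckStep) : s.toInt = 1 ∨ s.toInt = -1 := by
  cases s <;> simp [toInt]

lemma toInt_injective : Function.Injective toInt := by
  intro s t h
  cases s <;> cases t <;> simp_all [toInt]

end DyckStep

lemma List.sum_map_toInt (w : List DyckStep) :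
    (w.map toInt).sum = w.count U - w.count D := by
  induction w with
  | nil => simp
  | cons s w ih => cases s <;> simp [toInt, ih] <;> ring

lemma List.sum_map_mul_toInt (c : ℤ) (w : List DyckStep) :
    (w.map (c * toInt ·)).sum = c * (w.count U - w.count D) := by
  rw [sum_map_mul_left, sum_map_toInt]

lemma List.exists_map_toInt_eq {l : List ℤ} (hl : ∀ a ∈ l, a = 1 ∨ a = -1) :
    ∃ w : List DyckStep, w.map toInt = l := by
  induction l with
  | nil => exact ⟨[], rfl⟩
  | cons a l ih =>
    obtain ⟨w, rfl⟩ := ih fun b hb => hl b (mem_cons_of_mem a hb)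
    rcases hl a mem_cons_self with rfl | rfl
    · exact ⟨U :: w, rfl⟩
    · exact ⟨D :: w, rfl⟩

lemma List.sum_take_pos_of_ne_zero {l : List ℤ} (hl : ∀ a ∈ l, |a| ≤ 1)
    (hne : ∀ k, 0 < k → k < l.length → (l.take k).sum ≠ 0) (hpos : 0 < (l.take 1).sum) :
    ∀ k, 0 < k → k < l.length → 0 < (l.take k).sum := by
  intro k
  induction k with
  | zero => omega
  | succ k ih =>
    intro _ hk
    rcases Nat.eq_zero_or_pos k with rfl | hk0
    · exact hpos
    have hstep := abs_le.mp (hl l[k] (getElem_mem _))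
    have := hne (k + 1) (by omega) hk
    rw [sum_take_succ l k (by omega)] at this ⊢
    have := ih hk0 (by omega)
    omega

namespace DyckWord

lemma exists_isNested_toList_eq {w : List DyckStep} (hw : w ≠ [])
    (hpos : ∀ k, 0 < k → k < w.length → 0 < ((w.take k).map toInt).sum)
    (hsum : (w.map toInt).sum = 0) :
    ∃ p : DyckWord, p.IsNested ∧ p.toList = w := by
  simp only [sum_map_toInt] at hpos hsum
  have hle : ∀ k, (w.take k).count D ≤ (w.take k).count U := by
    intro k
    rcases Nat.eq_zero_or_pos k with rfl | hk0
    · simp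
    rcases lt_or_ge k w.length with hk | hk
    · have := hpos k hk0 hk
      omega
    · rw [take_of_length_le hk]
      omega
  let p : DyckWord := ⟨w, by omega, hle⟩
  refine ⟨p, ⟨fun h => hw (congrArg toList h), fun k hk0 hk => ?_⟩, rfl⟩
  show (w.take k).count D < (w.take k).count U
  have := hpos k hk0 hk
  omega

end DyckWord

def firstReturnPaths (n : ℕ) : Set (List ℤ) :=
  {l | l.length = n ∧ (∀ a ∈ l, a = 1 ∨ a = -1) ∧
    (∀ k, 0 < k → k < n → (l.take k).sum ≠ 0) ∧ l.sum = 0}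

lemma ofFn_mem_firstReturnPaths_iff {n : ℕ} (x : Fin n → ℤ) :
    List.ofFn x ∈ firstReturnPaths n ↔
      (∀ i, x i = 1 ∨ x i = -1) ∧
      (∀ k : ℕ, 1 ≤ k → k ≤ n - 1 →
        (∑ i : Fin n, if (i : ℕ) < k then x i else 0) ≠ 0) ∧
      (∑ i : Fin n, x i) = 0 := by
  simp only [firstReturnPaths, Set.mem_ofPred_eq, length_ofFn, forall_mem_ofFn_iff,
    sum_take_ofFn, sum_ofFn, Finset.sum_filter, true_and]
  refine and_congr_right fun _ => and_congr_left fun _ => ?_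
  exact forall_congr' fun k => ⟨fun h h1 h2 => h (by omega) (by omega),
    fun h h1 h2 => h (by omega) (by omega)⟩

lemma image_ofFn_eq_firstReturnPaths (n : ℕ) :
    List.ofFn '' {x : Fin n → ℤ |
        (∀ i, x i = 1 ∨ x i = -1) ∧
        (∀ k : ℕ, 1 ≤ k → k ≤ n - 1 →
          (∑ i : Fin n, if (i : ℕ) < k then x i else 0) ≠ 0) ∧
        (∑ i : Fin n, x i) = 0} = firstReturnPaths n := by
  ext l
  refine ⟨?_, fun hl => ?_⟩
  · rintro ⟨x, hx, rfl⟩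
    exact (ofFn_mem_firstReturnPaths_iff x).mpr hx
  · obtain rfl : l.length = n := hl.1
    refine ⟨fun i : Fin l.length => l[(i : ℕ)], ?_, ofFn_getElem⟩
    exact (ofFn_mem_firstReturnPaths_iff _).mp (by rwa [ofFn_getElem])

/-- The first-return walk `ε · (U q D)` with steps `U = 1`, `D = -1`. -/
def signedNest (n : ℕ) (εq : ℤˣ × {q : DyckWord // q.semilength = n}) : List ℤ :=
  εq.2.1.nest.toList.map (εq.1 * toInt ·)

lemma signedNest_injective (n : ℕ) : Function.Injective (signedNest n) := by
  rintro ⟨ε, q, hq⟩ ⟨ε', q', hq'⟩ h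
  simp only [signedNest, DyckWord.nest, cons_append, nil_append, map_cons, cons.injEq] at h
  obtain ⟨hhead, htail⟩ := h
  obtain rfl : ε = ε' := Units.val_injective (by simpa [toInt] using hhead)
  have := map_injective_iff.mpr ((mul_right_injective₀ ε.ne_zero).comp toInt_injective) htail
  obtain rfl : q = q' := DyckWord.ext (append_cancel_right this)
  rfl

lemma signedNest_mem_firstReturnPaths (n : ℕ) (εq : ℤˣ × {q : DyckWord // q.semilength = n}) :
    signedNest n εq ∈ firstReturnPaths (2 * (n + 1)) := by
  obtain ⟨ε, q, rfl⟩ := εq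
  have hε := Int.units_eq_one_or ε
  refine ⟨?_, ?_, fun k hk0 hk => ?_, ?_⟩
  · rw [signedNest, length_map, ← DyckWord.two_mul_semilength_eq_length,
      DyckWord.semilength_nest]
  · simp only [signedNest, mem_map]
    rintro _ ⟨s, -, rfl⟩
    rcases hε with rfl | rfl <;> rcases toInt_eq_one_or s with h | h <;> simp [h]
  · have hlen := q.nest.two_mul_semilength_eq_length
    rw [DyckWord.semilength_nest] at hlen
    have := DyckWord.IsNested.nest.2 hk0 (hlen ▸ hk)
    dsimp only [signedNest]
    rw [← map_take, sum_map_mul_toInt]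
    exact mul_ne_zero ε.ne_zero (by omega)
  · rw [signedNest, sum_map_mul_toInt, q.nest.count_U_eq_count_D, sub_self, mul_zero]

lemma map_units_mul_mem_firstReturnPaths {n : ℕ} {l : List ℤ} (hl : l ∈ firstReturnPaths n)
    (ε : ℤˣ) : l.map ((ε : ℤ) * ·) ∈ firstReturnPaths n := by
  obtain ⟨hlen, hpm, hne, hsum⟩ := hl
  refine ⟨by rw [length_map, hlen], ?_, fun k hk0 hk => ?_, ?_⟩
  · simp only [mem_map]
    rintro _ ⟨a, ha, rfl⟩
    rcases Int.units_eq_one_or ε with rfl | rfl <;> rcases hpm a ha with rfl | rfl <;> simp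
  · rw [← map_take, sum_map_mul_left, map_id']
    exact mul_ne_zero ε.ne_zero (hne k hk0 hk)
  · rw [sum_map_mul_left, map_id', hsum, mul_zero]

lemma signedNest_units_mul (n : ℕ) (ε : ℤˣ) (q : {q : DyckWord // q.semilength = n}) :
    signedNest n (ε, q) = (signedNest n (1, q)).map ((ε : ℤ) * ·) := by
  simp [signedNest, map_map, Function.comp_def]

lemma exists_signedNest_one_eq {n : ℕ} {l : List ℤ} (hl : l ∈ firstReturnPaths (2 * (n + 1)))
    (hup : 0 < (l.take 1).sum) : ∃ q, signedNest n (1, q) = l := by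
  obtain ⟨hlen, hpm, hne, hsum⟩ := hl
  obtain ⟨w, rfl⟩ := exists_map_toInt_eq hpm
  rw [length_map] at hlen
  have hpos := sum_take_pos_of_ne_zero
    (fun a ha => by rcases hpm a ha with rfl | rfl <;> norm_num) (by simpa [hlen] using hne) hup
  simp only [length_map, ← map_take] at hpos
  obtain ⟨p, hp, rfl⟩ :=
    DyckWord.exists_isNested_toList_eq (by rintro rfl; simp at hlen) hpos hsum
  have hsemi := congrArg DyckWord.semilength (p.nest_denest hp)
  rw [DyckWord.semilength_nest] at hsemi
  have := p.two_mul_semilength_eq_length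
  refine ⟨⟨p.denest hp, by omega⟩, ?_⟩
  simp [signedNest, p.nest_denest hp]

lemma range_signedNest (n : ℕ) : Set.range (signedNest n) = firstReturnPaths (2 * (n + 1)) := by
  refine Set.Subset.antisymm (Set.range_subset_iff.mpr (signedNest_mem_firstReturnPaths n))
    fun l hl => ?_
  have hstart : (l.take 1).sum = 1 ∨ (l.take 1).sum = -1 := by
    rw [sum_take_succ l 0 (by rw [hl.1]; omega), take_zero, sum_nil, zero_add]
    exact hl.2.1 _ (getElem_mem _)
  obtain ⟨ε, hε⟩ := Int.isUnit_iff.mpr hstart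
  obtain ⟨q, hq⟩ := exists_signedNest_one_eq (map_units_mul_mem_firstReturnPaths hl ε)
    (by rw [← map_take, sum_map_mul_left, map_id', ← hε, ← Units.val_mul, Int.units_mul_self]
        exact one_pos)
  refine ⟨(ε, q), ?_⟩
  rw [signedNest_units_mul, hq, map_map]
  conv_rhs => rw [← map_id l]
  refine map_congr_left fun a _ => ?_
  simp [← mul_assoc, ← Units.val_mul, Int.units_mul_self]

lemma ncard_firstReturnPaths (n : ℕ) : (firstReturnPaths (2 * (n + 1))).ncard = 2 * catalan n := by
  rw [← range_signedNest, Set.ncard_range_of_injective (signedNest_injective n),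
    Nat.card_eq_fintype_card, Fintype.card_prod, Fintype.card_units_int,
    DyckWord.card_dyckWord_semilength_eq_catalan]

lemma two_mul_catalan_mul_two_mul_add_one (n : ℕ) :
    2 * catalan n * (2 * n + 1) = (n + 1).centralBinom := by
  refine Nat.eq_of_mul_eq_mul_left (Nat.add_one_pos n) ?_
  rw [Nat.succ_mul_centralBinom_succ, ← succ_mul_catalan_eq_centralBinom]
  ring

/-- First return to the origin: the number of `±1`-valued sequences of length `2m` whose
partial sums are nonzero at steps `1,…,2m-1` and zero at step `2m` equals
`(1/(2m-1)) · binom(2m, m)`. -/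
theorem first_return_count (m : ℕ) (hm : 1 ≤ m) :
    (Set.ncard {x : Fin (2 * m) → ℤ |
        (∀ i, x i = 1 ∨ x i = -1) ∧
        (∀ k : ℕ, 1 ≤ k → k ≤ 2 * m - 1 →
          (∑ i : Fin (2 * m), if (i : ℕ) < k then x i else 0) ≠ 0) ∧
        (∑ i : Fin (2 * m), x i) = 0} : ℝ)
      = (1 / (2 * (m : ℝ) - 1)) * (Nat.choose (2 * m) m : ℝ) := by
  obtain ⟨n, rfl⟩ : ∃ n, m = n + 1 := ⟨m - 1, by omega⟩
  rw [← Set.ncard_image_of_injective _ List.ofFn_injective, image_ofFn_eq_firstReturnPaths,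
    ncard_firstReturnPaths, ← Nat.centralBinom_eq_two_mul_choose,
    ← two_mul_catalan_mul_two_mul_add_one]
  push_cast
  rw [show 2 * ((n : ℝ) + 1) - 1 = 2 * n + 1 by ring]
  field_simp
end
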